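/- arXiv:2506.05602 — 7 statements merged into one kernel-verified Lean document; each statement's English description precedes it below -/
import Mathlib

section
/- Let α and t be positive integers, and let G be a finite simple graph with no clique of size t and no stable (independent) set of size α. Then G has fewer than t^(α−1) vertices. -/
/-!
Induction on `t + α`: a vertex `a` splits the rest of the graph into its
neighbours, which contain no `K_{t-1}`, and its non-neighbours, which contain no stable set of
size `α - 1`. By induction there are fewer than `(t-1)^(α-1)` of the former and fewer than
`t^(α-2)` of the latter, and `(t-1)^(α-1) + t^(α-2) ≤ t^(α-1)`.
-/

open Finset

theorem Nat.pow_succ_add_succ_pow_le (t α : ℕ) :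
    t ^ (α + 1) + (t + 1) ^ α ≤ (t + 1) ^ (α + 1) :=
  calc t ^ (α + 1) + (t + 1) ^ α = t * t ^ α + (t + 1) ^ α := by ring
    _ ≤ t * (t + 1) ^ α + (t + 1) ^ α := by gcongr; omega
    _ = (t + 1) ^ (α + 1) := by ring

namespace SimpleGraph

variable {V : Type*} (G : SimpleGraph V) {s : Finset V} {a : V}

theorem card_eq_card_filter_adj_add_card_filter_compl_adj [DecidableEq V] [DecidableRel G.Adj]
    (ha : a ∈ s) :
    #s = #((s.erase a).filter (G.Adj a)) + #((s.erase a).filter (Gᶜ.Adj a)) + 1 := by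
  rw [← card_erase_add_one ha, ← card_filter_add_card_filter_not (G.Adj a)]
  congr 3
  refine filter_congr fun x hx => ?_
  rw [compl_adj]
  exact ⟨fun h => ⟨(ne_of_mem_erase hx).symm, h⟩, And.right⟩

variable {G}

theorem not_cliqueFreeOn_zero : ¬ G.CliqueFreeOn s 0 :=
  fun h => h (empty_subset _) (by simp)

theorem CliqueFreeOn.eq_empty_of_one (h : G.CliqueFreeOn s 1) : s = ∅ := by
  by_contra hs
  obtain ⟨a, ha⟩ := nonempty_iff_ne_empty.2 hs
  simpa using CliqueFreeOn.subset G (Set.singleton_subset_iff.2 (mem_coe.2 ha)) h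

theorem CliqueFreeOn.erase_filter_adj [DecidableEq V] [DecidableRel G.Adj] {n : ℕ}
    (hs : G.CliqueFreeOn s (n + 1)) (ha : a ∈ s) :
    G.CliqueFreeOn ((s.erase a).filter (G.Adj a)) n :=
  CliqueFreeOn.subset G (fun x hx => by
    simp only [coe_filter, mem_erase] at hx
    exact ⟨hx.1.2, hx.2⟩) (CliqueFreeOn.of_succ G hs ha)

theorem CliqueFreeOn.card_lt_pow {t α : ℕ} (ht : G.CliqueFreeOn s t)
    (hα : Gᶜ.CliqueFreeOn s α) : #s < t ^ (α - 1) := by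
  classical
  induction α generalizing t s with
  | zero => exact absurd hα not_cliqueFreeOn_zero
  | succ α ihα =>
  rcases α with _ | α
  · simp [hα.eq_empty_of_one]
  induction t generalizing s with
  | zero => exact absurd ht not_cliqueFreeOn_zero
  | succ t iht =>
  obtain rfl | ⟨a, ha⟩ := s.eq_empty_or_nonempty
  · simp
  have hsub (p : V → Prop) [DecidablePred p] : (((s.erase a).filter p : Finset V) : Set V) ⊆ s :=
    coe_subset.2 <| (filter_subset _ _).trans (erase_subset _ _)
  have hN := iht (ht.erase_filter_adj ha) (CliqueFreeOn.subset _ (hsub _) hα)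
  have hM := ihα (CliqueFreeOn.subset _ (hsub _) ht) (hα.erase_filter_adj ha)
  have hs := G.card_eq_card_filter_adj_add_card_filter_compl_adj ha
  have := Nat.pow_succ_add_succ_pow_le t α
  simp only [Nat.add_sub_cancel] at hN hM ⊢
  omega

end SimpleGraph

theorem stmt2_general {V : Type*} [Fintype V] (G : SimpleGraph V)
    (α t : ℕ)
    (hclique : ¬ ∃ K : Finset V, G.IsNClique t K)
    (hstable : ¬ ∃ S : Finset V, S.card = α ∧
      ∀ u ∈ S, ∀ v ∈ S, u ≠ v → ¬ G.Adj u v) :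
    Fintype.card V < t ^ (α - 1) := by
  have hG : G.CliqueFree t := fun K hK => hclique ⟨K, hK⟩
  have hGc : Gᶜ.CliqueFree α := fun S hS => by
    rw [SimpleGraph.isNClique_compl] at hS
    exact hstable ⟨S, hS.card_eq, hS.isIndepSet⟩
  simpa using hG.cliqueFreeOn.card_lt_pow (s := univ) hGc.cliqueFreeOn

theorem stmt2 {V : Type*} [Fintype V] (G : SimpleGraph V)
    (α t : ℕ) (hα : 1 ≤ α) (ht : 1 ≤ t)
    (hclique : ¬ ∃ K : Finset V, G.IsNClique t K)
    (hstable : ¬ ∃ S : Finset V, S.card = α ∧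
      ∀ u ∈ S, ∀ v ∈ S, u ≠ v → ¬ G.Adj u v) :
    Fintype.card V < t ^ (α - 1) :=
  stmt2_general G α t hclique hstable
end

section
/- Let α, s, t be positive integers and let G be a finite simple graph that contains no induced subgraph isomorphic to the complete bipartite graph K_{s,s}, has no clique of size t, and has no stable set of size α. Then G has fewer than α^s · t^(s−1) vertices. -/
/-- `G` has no induced subgraph isomorphic to the complete bipartite graph `K_{s,s}`. -/
def KssFree {V : Type*} (G : SimpleGraph V) (s : ℕ) : Prop :=
  ¬ ∃ A B : Finset V, A.card = s ∧ B.card = s ∧ Disjoint A B ∧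
      (∀ a ∈ A, ∀ b ∈ B, G.Adj a b) ∧
      (∀ a ∈ A, ∀ a' ∈ A, ¬ G.Adj a a') ∧
      (∀ b ∈ B, ∀ b' ∈ B, ¬ G.Adj b b')

namespace Stmt3Aux

open Finset

/-- A finset is stable (independent). -/
def IsStab {V : Type*} (G : SimpleGraph V) (S : Finset V) : Prop :=
  ∀ u ∈ S, ∀ v ∈ S, u ≠ v → ¬ G.Adj u v

lemma stab_subset {V : Type*} {G : SimpleGraph V} {S T : Finset V}
    (h : IsStab G T) (hs : S ⊆ T) : IsStab G S :=
  fun u hu v hv huv => h u (hs hu) v (hs hv) huv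

lemma choose_le_pow (n : ℕ) : ∀ k : ℕ, n.choose k ≤ n ^ k := by
  induction n with
  | zero => intro k; cases k <;> simp
  | succ n ih =>
    intro k
    cases k with
    | zero => simp
    | succ k =>
      rw [Nat.choose_succ_succ]
      have h1 : n.choose k ≤ n ^ k := ih k
      have h2 : n.choose (k + 1) ≤ n ^ (k + 1) := ih (k + 1)
      have h3 : n ^ k ≤ (n + 1) ^ k := Nat.pow_le_pow_left (by omega) k
      have h4 : n ^ k + n ^ (k + 1) ≤ (n + 1) ^ (k + 1) := by
        rw [pow_succ, pow_succ]
        calc n ^ k + n ^ k * n = n ^ k * (n + 1) := by ring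
          _ ≤ (n + 1) ^ k * (n + 1) := Nat.mul_le_mul_right _ h3
      simp only [Nat.succ_eq_add_one]
      omega

lemma le_choose : ∀ n k : ℕ, 1 ≤ k → k < n → n ≤ n.choose k := by
  intro n
  induction n with
  | zero => intro k _ h; omega
  | succ n ih =>
    intro k hk hkn
    obtain ⟨j, rfl⟩ : ∃ j, k = j + 1 := ⟨k - 1, by omega⟩
    rcases eq_or_ne j 0 with rfl | hj0
    · simp
    rcases eq_or_ne (j + 1) n with heq | hkn'
    · rw [heq, Nat.choose_succ_self_right]
    · have h1 : n ≤ n.choose j := ih j (by omega) (by omega)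
      have h2 : n ≤ n.choose (j + 1) := ih (j + 1) hk (by omega)
      have h3 : (n + 1).choose (j + 1) = n.choose j + n.choose (j + 1) :=
        Nat.choose_succ_succ n j
      omega

/-- Erdős–Szekeres-type bound: a graph with no `(t+1)`-clique and all stable sets
of size at most `a` on a vertex set `W` has `#W < (t+1)^a`. -/
lemma ramsey {V : Type*} [DecidableEq V] (G : SimpleGraph V) :
    ∀ (a t : ℕ) (W : Finset V),
      (∀ K ⊆ W, ¬ G.IsNClique (t + 1) K) →
      (∀ S ⊆ W, IsStab G S → S.card ≤ a) →
      W.card < (t + 1) ^ a := by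
  classical
  intro a
  induction a with
  | zero =>
    intro t W _ h2
    rcases W.eq_empty_or_nonempty with rfl | ⟨v, hv⟩
    · simp
    · exfalso
      have hst : IsStab G {v} := by
        intro u hu w hw huw
        simp only [mem_singleton] at hu hw
        subst hu; subst hw
        exact absurd rfl huw
      have := h2 {v} (by simpa using hv) hst
      simp at this
  | succ a iha =>
    intro t
    induction t with
    | zero =>
      intro W h1 _
      rcases W.eq_empty_or_nonempty with rfl | ⟨v, hv⟩
      · simp
      · exfalso
        exact h1 {v} (by simpa using hv) (SimpleGraph.isNClique_one.mpr ⟨v, rfl⟩)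
    | succ t iht =>
      intro W h1 h2
      rcases W.eq_empty_or_nonempty with rfl | ⟨v, hv⟩
      · exact Nat.pow_pos (by omega)
      set W1 := W.filter (fun u => G.Adj v u) with hW1
      set W2 := W.filter (fun u => u ≠ v ∧ ¬ G.Adj v u) with hW2
      have hc1 : W1.card < (t + 1) ^ (a + 1) := by
        apply iht
        · intro K hK hKcl
          have hKW : K ⊆ W := hK.trans (filter_subset _ _)
          have hvK : ∀ b ∈ K, G.Adj v b := by
            intro b hb
            exact (mem_filter.mp (hK hb)).2
          exact h1 (insert v K) (insert_subset hv hKW) (hKcl.insert hvK)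
        · intro S hS hSst
          exact h2 S (hS.trans (filter_subset _ _)) hSst
      have hc2 : W2.card < (t + 1 + 1) ^ a := by
        apply iha (t + 1)
        · intro K hK hKcl
          exact h1 K (hK.trans (filter_subset _ _)) hKcl
        · intro S hS hSst
          have hvS : v ∉ S := by
            intro hvS
            exact ((mem_filter.mp (hS hvS)).2.1) rfl
          have key : ∀ z ∈ S, ¬ G.Adj v z := fun z hz => (mem_filter.mp (hS hz)).2.2
          have hstab : IsStab G (insert v S) := by
            intro x hx y hy hxy hadj
            rcases mem_insert.mp hx with hx1 | hx1 <;> rcases mem_insert.mp hy with hy1 | hy1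
            · exact hxy (hx1.trans hy1.symm)
            · exact key y hy1 (hx1 ▸ hadj)
            · exact key x hx1 (hy1 ▸ hadj.symm)
            · exact hSst x hx1 y hy1 hxy hadj
          have := h2 (insert v S) (insert_subset hv (hS.trans (filter_subset _ _))) hstab
          rw [card_insert_of_notMem hvS] at this
          omega
      have hcov : W ⊆ insert v (W1 ∪ W2) := by
        intro u hu
        rcases eq_or_ne u v with rfl | huv
        · exact mem_insert_self _ _
        · by_cases hadj : G.Adj v u
          · exact mem_insert_of_mem (mem_union_left _ (mem_filter.mpr ⟨hu, hadj⟩))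
          · exact mem_insert_of_mem (mem_union_right _ (mem_filter.mpr ⟨hu, huv, hadj⟩))
      have hcard : W.card ≤ W1.card + W2.card + 1 := by
        calc W.card ≤ (insert v (W1 ∪ W2)).card := card_le_card hcov
          _ ≤ (W1 ∪ W2).card + 1 := card_insert_le _ _
          _ ≤ W1.card + W2.card + 1 := by
              have := card_union_le W1 W2; omega
      have h3 : (t + 1) ^ a ≤ (t + 1 + 1) ^ a := Nat.pow_le_pow_left (by omega) a
      have h4 : (t + 1) ^ (a + 1) ≤ (t + 1 + 1) ^ a * (t + 1) := by
        rw [pow_succ]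
        exact Nat.mul_le_mul_right _ h3
      have h5 : (t + 1 + 1) ^ (a + 1) = (t + 1 + 1) ^ a * (t + 1) + (t + 1 + 1) ^ a := by
        ring
      omega

/-- Convenient form: no `t`-clique and no stable `s`-set in `W` implies `#W < t^(s-1)`. -/
lemma ramsey' {V : Type*} [DecidableEq V] (G : SimpleGraph V) (s t : ℕ)
    (hs : 1 ≤ s) (ht : 1 ≤ t) (W : Finset V)
    (hcl : ∀ K ⊆ W, ¬ G.IsNClique t K)
    (hst : ¬ ∃ B ⊆ W, B.card = s ∧ IsStab G B) :
    W.card < t ^ (s - 1) := by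
  have h := ramsey G (s - 1) (t - 1) W
    (by
      intro K hK
      have : t - 1 + 1 = t := by omega
      rw [this]
      exact hcl K hK)
    (by
      intro S hS hSst
      by_contra hcard
      push_neg at hcard
      have hsS : s ≤ S.card := by omega
      obtain ⟨B, hB, hBcard⟩ := S.exists_subset_card_eq hsS
      exact hst ⟨B, hB.trans hS, hBcard, stab_subset hSst hB⟩)
  have : t - 1 + 1 = t := by omega
  rwa [this] at h

end Stmt3Aux

open Finset Stmt3Aux in
theorem stmt3 {V : Type*} [Fintype V] (G : SimpleGraph V)
    (α s t : ℕ) (hα : 1 ≤ α) (hs : 1 ≤ s) (ht : 1 ≤ t)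
    (hKss : KssFree G s)
    (hclique : ¬ ∃ K : Finset V, G.IsNClique t K)
    (hstable : ¬ ∃ S : Finset V, S.card = α ∧
      ∀ u ∈ S, ∀ v ∈ S, u ≠ v → ¬ G.Adj u v) :
    Fintype.card V < α ^ s * t ^ (s - 1) := by
  classical
  have hcl : ∀ K ⊆ (univ : Finset V), ¬ G.IsNClique t K := fun K _ hK => hclique ⟨K, hK⟩
  induction α using Nat.strong_induction_on with
  | _ α IH =>
  by_cases hαs : α ≤ s
  · -- small α: pure Ramsey
    have h := ramsey' G α t hα ht univ hcl
      (by
        rintro ⟨B, _, hBcard, hBst⟩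
        exact hstable ⟨B, hBcard, hBst⟩)
    have h2 : t ^ (α - 1) ≤ t ^ (s - 1) := Nat.pow_le_pow_right ht (by omega)
    have h3 : t ^ (s - 1) ≤ α ^ s * t ^ (s - 1) :=
      Nat.le_mul_of_pos_left _ (Nat.pow_pos hα)
    have hcardV : Fintype.card V = (univ : Finset V).card := (card_univ).symm
    omega
  · push_neg at hαs   -- s < α
    by_cases hS : ∃ S : Finset V, S.card = α - 1 ∧ IsStab G S
    · obtain ⟨S, hScard, hSstab⟩ := hS
      obtain ⟨s', rfl⟩ : ∃ s', s = s' + 1 := ⟨s - 1, by omega⟩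
      obtain ⟨β, rfl⟩ : ∃ β, α = β + 1 := ⟨α - 1, by omega⟩
      have hβs : s' + 1 ≤ β := by omega
      have hScard' : S.card = β := by simpa using hScard
      -- common neighborhoods of stable (s'+1)-subsets of S
      set CA : Finset V → Finset V :=
        fun A => univ.filter (fun v => ∀ a ∈ A, G.Adj a v) with hCAdef
      -- common non-neighborhoods of (β - s')-subsets of S
      set LT : Finset V → Finset V :=
        fun T => univ.filter (fun v => v ∉ T ∧ ∀ u ∈ T, ¬ G.Adj u v) with hLTdef
      have hCA : ∀ A ∈ S.powersetCard (s' + 1), (CA A).card < t ^ s' := by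
        intro A hA
        obtain ⟨hAsub, hAcard⟩ := mem_powersetCard.mp hA
        have := ramsey' G (s' + 1) t (by omega) ht (CA A)
          (fun K hK => hcl K (hK.trans (filter_subset _ _)))
          (by
            rintro ⟨B, hBsub, hBcard, hBst⟩
            apply hKss
            refine ⟨A, B, hAcard, hBcard, ?_, ?_, ?_, ?_⟩
            · rw [disjoint_left]
              intro a haA haB
              have := (mem_filter.mp (hBsub haB)).2 a haA
              exact G.irrefl this
            · intro a ha b hb
              exact (mem_filter.mp (hBsub hb)).2 a ha
            · intro a ha a' ha'
              rcases eq_or_ne a a' with rfl | hne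
              · exact G.irrefl
              · exact stab_subset hSstab hAsub a ha a' ha' hne
            · intro b hb b' hb'
              rcases eq_or_ne b b' with rfl | hne
              · exact G.irrefl
              · exact hBst b hb b' hb' hne)
        simpa using this
      have hLT : ∀ T ∈ S.powersetCard (β - s'), (LT T).card < t ^ s' := by
        intro T hT
        obtain ⟨hTsub, hTcard⟩ := mem_powersetCard.mp hT
        have := ramsey' G (s' + 1) t (by omega) ht (LT T)
          (fun K hK => hcl K (hK.trans (filter_subset _ _)))
          (by
            rintro ⟨B, hBsub, hBcard, hBst⟩
            apply hstable
            have hdisj : Disjoint B T := by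
              rw [disjoint_left]
              intro b hbB hbT
              exact (mem_filter.mp (hBsub hbB)).2.1 hbT
            refine ⟨B ∪ T, ?_, ?_⟩
            · rw [card_union_of_disjoint hdisj, hBcard, hTcard]
              omega
            · intro u hu v hv huv
              rcases mem_union.mp hu with hu' | hu'
              · rcases mem_union.mp hv with hv' | hv'
                · exact hBst u hu' v hv' huv
                · intro hadj
                  exact (mem_filter.mp (hBsub hu')).2.2 v hv' hadj.symm
              · rcases mem_union.mp hv with hv' | hv'
                · exact (mem_filter.mp (hBsub hv')).2.2 u hu'
                · exact hSstab u (hTsub hu') v (hTsub hv') huv)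
        simpa using this
      -- covering
      have hcov : (univ : Finset V) ⊆
          S ∪ (S.powersetCard (s' + 1)).biUnion CA ∪ (S.powersetCard (β - s')).biUnion LT := by
        intro v _
        by_cases hvS : v ∈ S
        · exact mem_union_left _ (mem_union_left _ hvS)
        by_cases hd : s' + 1 ≤ (S.filter (fun u => G.Adj u v)).card
        · obtain ⟨A, hAsub, hAcard⟩ := (S.filter (fun u => G.Adj u v)).exists_subset_card_eq hd
          apply mem_union_left
          apply mem_union_right
          apply mem_biUnion.mpr
          refine ⟨A, mem_powersetCard.mpr ⟨hAsub.trans (filter_subset _ _), hAcard⟩, ?_⟩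
          exact mem_filter.mpr ⟨mem_univ _, fun a ha => (mem_filter.mp (hAsub ha)).2⟩
        · have hsplit := card_filter_add_card_filter_not (s := S)
            (p := fun u => G.Adj u v)
          have hge : β - s' ≤ (S.filter (fun u => ¬ G.Adj u v)).card := by omega
          obtain ⟨T, hTsub, hTcard⟩ := (S.filter (fun u => ¬ G.Adj u v)).exists_subset_card_eq hge
          apply mem_union_right
          apply mem_biUnion.mpr
          refine ⟨T, mem_powersetCard.mpr ⟨hTsub.trans (filter_subset _ _), hTcard⟩, ?_⟩
          refine mem_filter.mpr ⟨mem_univ _, ?_, ?_⟩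
          · intro hvT
            exact hvS (hTsub hvT |> (filter_subset _ _))
          · intro u hu
            exact (mem_filter.mp (hTsub hu)).2
      -- counting
      have hm1 : 1 ≤ t ^ s' := Nat.pow_pos ht
      have hcard1 : ((S.powersetCard (s' + 1)).biUnion CA).card ≤
          β.choose (s' + 1) * (t ^ s' - 1) := by
        calc ((S.powersetCard (s' + 1)).biUnion CA).card
            ≤ ∑ A ∈ S.powersetCard (s' + 1), (CA A).card := card_biUnion_le
          _ ≤ (S.powersetCard (s' + 1)).card • (t ^ s' - 1) := by
              apply sum_le_card_nsmul
              intro A hA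
              have := hCA A hA
              omega
          _ = β.choose (s' + 1) * (t ^ s' - 1) := by
              rw [smul_eq_mul, card_powersetCard, hScard']
      have hcard2 : ((S.powersetCard (β - s')).biUnion LT).card ≤
          β.choose (β - s') * (t ^ s' - 1) := by
        calc ((S.powersetCard (β - s')).biUnion LT).card
            ≤ ∑ T ∈ S.powersetCard (β - s'), (LT T).card := card_biUnion_le
          _ ≤ (S.powersetCard (β - s')).card • (t ^ s' - 1) := by
              apply sum_le_card_nsmul
              intro T hT
              have := hLT T hT
              omega
          _ = β.choose (β - s') * (t ^ s' - 1) := by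
              rw [smul_eq_mul, card_powersetCard, hScard']
      have hn : Fintype.card V ≤ β + β.choose (s' + 1) * (t ^ s' - 1)
          + β.choose (β - s') * (t ^ s' - 1) := by
        have h0 : Fintype.card V = (univ : Finset V).card := (card_univ).symm
        have h1 := card_le_card hcov
        have h2 := card_union_le (S ∪ (S.powersetCard (s' + 1)).biUnion CA)
          ((S.powersetCard (β - s')).biUnion LT)
        have h3 := card_union_le S ((S.powersetCard (s' + 1)).biUnion CA)
        omega
      -- arithmetic
      have hsymm : β.choose (β - s') = β.choose s' := Nat.choose_symm (by omega)
      have hpas : (β + 1).choose (s' + 1) = β.choose s' + β.choose (s' + 1) :=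
        Nat.choose_succ_succ β s'
      have hle1 : β + 1 ≤ (β + 1).choose (s' + 1) := le_choose (β + 1) (s' + 1) (by omega) (by omega)
      have hle2 : (β + 1).choose (s' + 1) ≤ (β + 1) ^ (s' + 1) := choose_le_pow (β + 1) (s' + 1)
      set b := (β + 1).choose (s' + 1) with hb
      set m := t ^ s' with hm
      have e1 : β.choose (s' + 1) * (m - 1) + β.choose (β - s') * (m - 1) = b * (m - 1) := by
        rw [hsymm, ← add_mul, hpas]
        ring
      have e2 : b * (m - 1) + b = b * m := by
        have : m - 1 + 1 = m := by omega
        calc b * (m - 1) + b = b * ((m - 1) + 1) := by ring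
          _ = b * m := by rw [this]
      have e3 : b * m ≤ (β + 1) ^ (s' + 1) * m := Nat.mul_le_mul_right m hle2
      have hgoal : (β + 1) ^ ((s' + 1)) * t ^ ((s' + 1) - 1) = (β + 1) ^ (s' + 1) * m := by
        simp [hm]
      rw [hgoal]
      omega
    · -- no stable set of size α - 1 either: use IH at α - 1
      have h := IH (α - 1) (by omega) (by omega)
        (by
          rintro ⟨S, hScard, hSst⟩
          exact hS ⟨S, hScard, hSst⟩)
      have h2 : (α - 1) ^ s * t ^ (s - 1) ≤ α ^ s * t ^ (s - 1) :=
        Nat.mul_le_mul_right _ (Nat.pow_le_pow_left (by omega) s)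
      omega
end

section
/- Let r, s be positive integers and let σ_r = s^((4s)^(r−1)). Let α, t be positive integers, let G be a finite simple graph with no induced K_{s,s} and no clique of size t, and let 𝒳 be a family of pairwise disjoint nonempty subsets of V(G), each of cardinality at most r, with |𝒳| ≥ α^(σ_r) · t^(σ_r − 1). Then there are α members of 𝒳 that are pairwise anticomplete in G. -/
/-- For fixed `s`, the quantity `σ_r = s^((4s)^(r-1))`. -/
def sigma' (s r : ℕ) : ℕ := s ^ ((4 * s) ^ (r - 1))

namespace Stmt5Aux


lemma choose_le_pow' (n k : ℕ) : Nat.choose n k ≤ n ^ k := by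
  induction n generalizing k with
  | zero =>
    cases k with
    | zero => simp
    | succ k => simp
  | succ n ih =>
    cases k with
    | zero => simp
    | succ k =>
      rw [Nat.choose_succ_succ]
      have h1 : Nat.choose n k ≤ n ^ k := ih k
      have h2 : Nat.choose n (k+1) ≤ n ^ (k+1) := ih (k+1)
      have h3 : n ^ k + n ^ (k+1) ≤ (n+1) ^ (k+1) := by
        have he : (n+1) ^ (k+1) = (n+1)^k + n * (n+1)^k := by ring
        have hnk : n ^ k ≤ (n+1) ^ k := Nat.pow_le_pow_left (by omega) k
        have h4 : n * n^k ≤ n * (n+1)^k := Nat.mul_le_mul_left n hnk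
        have h5 : n ^ (k+1) = n * n ^ k := by ring
        omega
      simp only [Nat.succ_eq_add_one]
      omega

lemma sum_choose_le (a s : ℕ) : ∑ j ∈ Finset.range (s+1), Nat.choose a j ≤ (a+1) ^ s := by
  induction s with
  | zero => simp
  | succ s ih =>
    rw [Finset.sum_range_succ]
    have h2 : Nat.choose a (s+1) ≤ a * (a+1)^s := by
      calc Nat.choose a (s+1) ≤ a ^ (s+1) := choose_le_pow' a (s+1)
      _ = a * a ^ s := by ring
      _ ≤ a * (a+1)^s := Nat.mul_le_mul_left a (Nat.pow_le_pow_left (by omega) s)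
    have : (a+1) ^ (s+1) = (a+1)^s + a * (a+1)^s := by ring
    omega

lemma pow_step (t n : ℕ) (ht : 1 ≤ t) (hn : 1 ≤ n) :
    (t - 1) ^ n + t ^ (n - 1) ≤ t ^ n := by
  obtain ⟨t', rfl⟩ : ∃ t', t = t' + 1 := ⟨t - 1, by omega⟩
  obtain ⟨n', rfl⟩ : ∃ n', n = n' + 1 := ⟨n - 1, by omega⟩
  simp only [Nat.add_sub_cancel]
  clear ht hn
  induction n' with
  | zero => simp
  | succ m ih =>
    have key : (t'+1) * (t' ^ (m+1) + (t'+1) ^ m) ≤ (t'+1) * (t'+1) ^ (m+1) :=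
      Nat.mul_le_mul_left _ ih
    calc t' ^ (m+1+1) + (t'+1) ^ (m+1)
        ≤ (t'+1) * t'^(m+1) + (t'+1)^(m+1) := by
          have : t' ^ (m+1+1) = t' * t' ^ (m+1) := by ring
          have h4 : t' * t'^(m+1) ≤ (t'+1) * t'^(m+1) :=
            Nat.mul_le_mul_right _ (by omega)
          omega
      _ ≤ (t'+1) * (t' ^ (m+1) + (t'+1) ^ m) := by
          have : (t'+1) * (t' ^ (m+1) + (t'+1) ^ m)
              = (t'+1)*t'^(m+1) + (t'+1)^(m+1) := by ring
          omega
      _ ≤ (t'+1) * (t'+1) ^ (m+1) := key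
      _ = (t'+1) ^ (m+1+1) := by ring


lemma sigma_succ (s r : ℕ) (hr : 1 ≤ r) : sigma' s (r+1) = (sigma' s r) ^ (4*s) := by
  unfold sigma'
  rw [← pow_mul, ← pow_succ]
  rw [show r+1-1 = (r-1)+1 from by omega]

lemma s_le_sigma (s r : ℕ) (hs : 1 ≤ s) : s ≤ sigma' s r := by
  unfold sigma'
  calc s = s ^ 1 := (pow_one s).symm
  _ ≤ s ^ ((4*s)^(r-1)) := Nat.pow_le_pow_right hs (Nat.one_le_pow _ _ (by omega))

lemma one_le_sigma (s r : ℕ) (hs : 1 ≤ s) : 1 ≤ sigma' s r :=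
  le_trans hs (s_le_sigma s r hs)

lemma aux_8pow (n : ℕ) : n + 1 ≤ 8 ^ n := by
  induction n with
  | zero => simp
  | succ n ih =>
    have : 8^(n+1) = 8 * 8^n := by ring
    omega

lemma rsucc_le_sigma (s r : ℕ) (hs : 2 ≤ s) (hr : 1 ≤ r) : r + 1 ≤ sigma' s r := by
  unfold sigma'
  have h1 : r ≤ (4*s)^(r-1) := by
    have h8 : (r-1) + 1 ≤ 8 ^ (r-1) := aux_8pow (r-1)
    have hmono : (8:ℕ)^(r-1) ≤ (4*s)^(r-1) := Nat.pow_le_pow_left (by omega) _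
    omega
  calc r + 1 ≤ 2 ^ r := Nat.lt_two_pow_self (n := r)
  _ ≤ 2 ^ ((4*s)^(r-1)) := Nat.pow_le_pow_right (by omega) h1
  _ ≤ s ^ ((4*s)^(r-1)) := Nat.pow_le_pow_left hs _

lemma exp_key (s R σ' : ℕ) (hs : 2 ≤ s) (hR : 2 ≤ R) (h1 : s ≤ σ') (h2 : R ≤ σ') :
    (R+s+2) * (s + 2*R*s^2*σ') ≤ σ' ^ (4*s) := by
  have h78 : σ' ^ 7 ≤ σ' ^ (4*s) := Nat.pow_le_pow_right (by omega) (by omega)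
  by_cases h3 : 3 ≤ σ'
  · have e1 : R + s + 2 ≤ 3 * σ' := by omega
    have e2 : s + 2*R*s^2*σ' ≤ 3*R*s^2*σ' := by
      have : s ≤ R*s^2*σ' := by
        calc s = 1*(s*1)*1 := by ring
        _ ≤ R*(s*s)*σ' := by
            apply Nat.mul_le_mul (Nat.mul_le_mul (by omega) (Nat.mul_le_mul_left s (by omega)))
              (by omega)
        _ = R*s^2*σ' := by ring
      have h22 : 2*R*s^2*σ' = 2*(R*s^2*σ') := by ring
      have h23 : 3*R*s^2*σ' = 3*(R*s^2*σ') := by ring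
      omega
    calc (R+s+2) * (s + 2*R*s^2*σ') ≤ (3*σ') * (3*R*s^2*σ') :=
          Nat.mul_le_mul e1 e2
    _ = 9 * R * (s*s) * (σ'*σ') := by ring
    _ ≤ σ'^2 * σ' * (σ'*σ') * (σ'*σ') := by
        apply Nat.mul_le_mul
        apply Nat.mul_le_mul
        apply Nat.mul_le_mul
        · calc (9:ℕ) ≤ σ'*σ' := by nlinarith
          _ = σ'^2 := by ring
        · exact h2
        · exact Nat.mul_le_mul h1 h1
        · exact le_refl _
    _ = σ' ^ 7 := by ring
    _ ≤ σ' ^ (4*s) := h78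
  · have hσ2 : σ' = 2 := by omega
    have hs2 : s = 2 := by omega
    have hR2 : R = 2 := by omega
    subst hσ2; subst hs2; subst hR2
    norm_num

lemma two_le_A1 (s r α : ℕ) (hs : 2 ≤ s) (hr : 1 ≤ r) (hα : 2 ≤ α) :
    α ≤ (4*α*r) ^ (s + (r*(s-1)+1)) * (s * Nat.choose (r*(s-1)+1) s + s + 1) := by
  have h1 : α ≤ 4*α*r := by
    calc α = α * 1 := by ring
    _ ≤ (4*α) * r := Nat.mul_le_mul (by omega) hr
    _ = 4*α*r := by ring
  have h2 : 4*α*r ≤ (4*α*r) ^ (s + (r*(s-1)+1)) := Nat.le_self_pow (by omega) _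
  have h3 : (4*α*r) ^ (s + (r*(s-1)+1)) ≤
      (4*α*r) ^ (s + (r*(s-1)+1)) * (s * Nat.choose (r*(s-1)+1) s + s + 1) :=
    Nat.le_mul_of_pos_right _ (by omega)
  omega

lemma A1_le (s r α : ℕ) (hs : 2 ≤ s) (hr : 1 ≤ r) (hα : 2 ≤ α) :
    (4*α*r) ^ (s + (r*(s-1)+1)) * (s * Nat.choose (r*(s-1)+1) s + s + 1)
      ≤ (8*α*(r+1)*s) ^ (2*(r+1)*s) := by
  obtain ⟨s', rfl⟩ : ∃ s', s = s' + 2 := ⟨s - 2, by omega⟩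
  set Q := 8*α*(r+1)*(s'+2) with hQ
  have hQ1 : 1 ≤ Q := by
    have : 0 < Q := by rw [hQ]; positivity
    omega
  have hbase : 4*α*r ≤ Q := by
    rw [hQ]
    have h1 : 4*α*r ≤ 8*α*(r+1) :=
      Nat.mul_le_mul (by omega) (by omega)
    have h2 : 8*α*(r+1) ≤ 8*α*(r+1)*(s'+2) := Nat.le_mul_of_pos_right _ (by omega)
    omega
  have hsimp : (s'+2) - 1 = s' + 1 := by omega
  rw [hsimp]
  set k' := r*(s'+1)+1 with hk'
  set C := Nat.choose k' (s'+2) with hC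
  have hrs : r*(s'+1) = r*s' + r := by ring
  have hKbound : k' ≤ (r+1)*(s'+2) := by
    rw [hk']
    have h6 : (r+1)*(s'+2) = r*s' + 2*r + s' + 2 := by ring
    omega
  have hKQbase : (r+1)*(s'+2) ≤ Q := by
    rw [hQ]
    have : 1*((r+1)*(s'+2)) ≤ (8*α)*((r+1)*(s'+2)) :=
      Nat.mul_le_mul_right _ (by omega)
    have he : (8*α)*((r+1)*(s'+2)) = 8*α*(r+1)*(s'+2) := by ring
    omega
  have hCK : C ≤ Q ^ (s'+2) := by
    calc C ≤ k' ^ (s'+2) := choose_le_pow' _ _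
    _ ≤ ((r+1)*(s'+2)) ^ (s'+2) := Nat.pow_le_pow_left hKbound _
    _ ≤ Q ^ (s'+2) := Nat.pow_le_pow_left hKQbase _
  have hW0 : (s'+2) * C + (s'+2) + 1 ≤ Q ^ ((s'+2)+1) := by
    have hC1 : 1 ≤ C := by
      rw [hC]
      apply Nat.choose_pos
      rw [hk']
      have : s'+1 ≤ r*(s'+1) := Nat.le_mul_of_pos_left _ (by omega)
      omega
    have h3 : (s'+2) * C + (s'+2) + 1 ≤ (3*(s'+2)) * C := by
      have h31 : (s'+2) ≤ (s'+2)*C := Nat.le_mul_of_pos_right _ (by omega)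
      have h32 : (3*(s'+2))*C = 3*((s'+2)*C) := by ring
      omega
    have hQ3s : 3*(s'+2) ≤ Q := by
      rw [hQ]
      have h1 : 3*(s'+2) ≤ (8*(α*(r+1)))*(s'+2) := by
        apply Nat.mul_le_mul_right
        have : 1 ≤ α*(r+1) := by
          calc 1 = 1*1 := rfl
          _ ≤ α*(r+1) := Nat.mul_le_mul (by omega) (by omega)
        omega
      have he : (8*(α*(r+1)))*(s'+2) = 8*α*(r+1)*(s'+2) := by ring
      omega
    calc (s'+2) * C + (s'+2) + 1 ≤ (3*(s'+2)) * C := h3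
    _ ≤ Q * Q ^ (s'+2) := Nat.mul_le_mul hQ3s hCK
    _ = Q ^ ((s'+2)+1) := by rw [← pow_succ']
  calc (4*α*r) ^ ((s'+2) + k') * ((s'+2) * C + (s'+2) + 1)
      ≤ Q ^ ((s'+2) + k') * Q ^ ((s'+2)+1) :=
        Nat.mul_le_mul (Nat.pow_le_pow_left hbase _) hW0
  _ = Q ^ ((s'+2) + k' + ((s'+2)+1)) := by rw [← pow_add]
  _ ≤ Q ^ (2*(r+1)*(s'+2)) := by
      apply Nat.pow_le_pow_right hQ1
      rw [hk']
      have h6 : 2*(r+1)*(s'+2) = 2*(r*s') + 4*r + 2*s' + 4 := by ring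
      omega

lemma Q_le_pow (s r α : ℕ) (hs : 2 ≤ s) (hr : 1 ≤ r) (hα : 2 ≤ α) :
    8*α*(r+1)*s ≤ α ^ ((r+1)+s+2) := by
  have h1 : r + 1 ≤ 2 ^ r := Nat.lt_two_pow_self (n := r)
  have h2 : s ≤ 2 ^ (s-1) := by
    have := Nat.lt_two_pow_self (n := s-1)
    omega
  have h3 : 8*(r+1)*s ≤ 2 ^ (r+s+2) := by
    calc 8*(r+1)*s ≤ 8*(2^r)*(2^(s-1)) :=
          Nat.mul_le_mul (Nat.mul_le_mul le_rfl h1) h2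
    _ = 2^3 * 2^r * 2^(s-1) := by norm_num
    _ = 2 ^ (3 + r + (s-1)) := by rw [pow_add, pow_add]
    _ = 2 ^ (r+s+2) := by
        congr 1
        omega
  calc 8*α*(r+1)*s = α * (8*(r+1)*s) := by ring
  _ ≤ α * 2^(r+s+2) := Nat.mul_le_mul_left _ h3
  _ ≤ α * α^(r+s+2) := Nat.mul_le_mul_left _ (Nat.pow_le_pow_left hα _)
  _ = α ^ ((r+s+2)+1) := (pow_succ' α _).symm
  _ = α ^ ((r+1)+s+2) := by
      congr 1
      omega

/-- The key numerical inequality for the induction step. -/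
lemma key_arith (s r α t : ℕ) (hs : 2 ≤ s) (hr : 1 ≤ r) (hα : 2 ≤ α) (ht : 1 ≤ t) :
    ((r+1) * (((4*α*r) ^ (s + (r*(s-1)+1)) * (s * Nat.choose (r*(s-1)+1) s + s + 1)) ^ (sigma' s r)
        * t ^ (sigma' s r - 1) + α)) ^ s * t ^ (s-1)
      ≤ α ^ (sigma' s (r+1)) * t ^ (sigma' s (r+1) - 1) := by
  set σ' := sigma' s r with hσ'
  set A1 := (4*α*r) ^ (s + (r*(s-1)+1)) * (s * Nat.choose (r*(s-1)+1) s + s + 1) with hA1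
  set Q := 8*α*(r+1)*s with hQdef
  have hσ'1 : 1 ≤ σ' := one_le_sigma s r (by omega)
  have hσ's : s ≤ σ' := s_le_sigma s r (by omega)
  have hσ'R : r + 1 ≤ σ' := rsucc_le_sigma s r hs hr
  have hσeq : sigma' s (r+1) = σ' ^ (4*s) := sigma_succ s r hr
  have hαA1 : α ≤ A1 := two_le_A1 s r α hs hr hα
  have hA1Q : A1 ≤ Q ^ (2*(r+1)*s) := A1_le s r α hs hr hα
  have hQα : Q ≤ α ^ ((r+1)+s+2) := Q_le_pow s r α hs hr hα
  have hQ1 : 1 ≤ Q := by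
    have : 0 < Q := by rw [hQdef]; positivity
    omega
  have ht1 : 1 ≤ t ^ (σ' - 1) := Nat.one_le_pow _ _ (by omega)
  -- β ≤ 2(r+1) A1^σ' t^(σ'-1)
  have hβ : (r+1) * (A1 ^ σ' * t ^ (σ'-1) + α) ≤ (2*(r+1)) * (A1 ^ σ' * t ^ (σ'-1)) := by
    have hαF : α ≤ A1 ^ σ' * t ^ (σ'-1) := by
      calc α ≤ A1 := hαA1
      _ = A1 ^ 1 * 1 := by ring
      _ ≤ A1 ^ σ' * t ^ (σ'-1) :=
          Nat.mul_le_mul (Nat.pow_le_pow_right (by omega) hσ'1) ht1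
    calc (r+1) * (A1 ^ σ' * t ^ (σ'-1) + α)
        ≤ (r+1) * (A1 ^ σ' * t ^ (σ'-1) + A1 ^ σ' * t ^ (σ'-1)) :=
          Nat.mul_le_mul_left _ (by omega)
    _ = (2*(r+1)) * (A1 ^ σ' * t ^ (σ'-1)) := by ring
  -- main computation
  have hexp1 : (σ'-1)*s + (s-1) = σ'*s - 1 := by
    have h1 : (σ'-1)*s = σ'*s - s := by
      rw [Nat.sub_one_mul]
    have h2 : s ≤ σ'*s := Nat.le_mul_of_pos_left _ (by omega)
    omega
  have hfinal1 : ((r+1) * (A1 ^ σ' * t ^ (σ'-1) + α)) ^ s * t ^ (s-1)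
      ≤ (2*(r+1))^s * A1 ^ (σ'*s) * t ^ (σ'*s - 1) := by
    calc ((r+1) * (A1 ^ σ' * t ^ (σ'-1) + α)) ^ s * t ^ (s-1)
        ≤ ((2*(r+1)) * (A1 ^ σ' * t ^ (σ'-1))) ^ s * t ^ (s-1) :=
          Nat.mul_le_mul_right _ (Nat.pow_le_pow_left hβ s)
    _ = (2*(r+1))^s * (A1^σ')^s * ((t^(σ'-1))^s * t^(s-1)) := by
        rw [mul_pow, mul_pow]
        ring
    _ = (2*(r+1))^s * A1^(σ'*s) * t^(σ'*s - 1) := by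
        rw [← pow_mul, ← pow_mul, ← pow_add, hexp1]
  have hmid : (2*(r+1))^s * A1 ^ (σ'*s) ≤ Q ^ (s + 2*(r+1)*s*(σ'*s)) := by
    calc (2*(r+1))^s * A1 ^ (σ'*s)
        ≤ Q^s * (Q^(2*(r+1)*s)) ^ (σ'*s) := by
          apply Nat.mul_le_mul
          · apply Nat.pow_le_pow_left
            rw [hQdef]
            calc 2*(r+1) ≤ 2*(r+1)*(4*α) := Nat.le_mul_of_pos_right _ (by omega)
            _ ≤ 2*(r+1)*(4*α)*s := Nat.le_mul_of_pos_right _ (by omega)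
            _ = 8*α*(r+1)*s := by ring
          · exact Nat.pow_le_pow_left hA1Q _
    _ = Q ^ (s + 2*(r+1)*s*(σ'*s)) := by rw [← pow_mul, ← pow_add]
  have hexpbound : ((r+1)+s+2) * (s + 2*(r+1)*s*(σ'*s)) ≤ σ' ^ (4*s) := by
    have he : 2*(r+1)*s*(σ'*s) = 2*(r+1)*s^2*σ' := by ring
    rw [he]
    exact exp_key s (r+1) σ' hs (by omega) hσ's hσ'R
  have hQfin : Q ^ (s + 2*(r+1)*s*(σ'*s)) ≤ α ^ (σ' ^ (4*s)) := by
    calc Q ^ (s + 2*(r+1)*s*(σ'*s)) ≤ (α ^ ((r+1)+s+2)) ^ (s + 2*(r+1)*s*(σ'*s)) :=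
          Nat.pow_le_pow_left hQα _
    _ = α ^ (((r+1)+s+2) * (s + 2*(r+1)*s*(σ'*s))) := by rw [← pow_mul]
    _ ≤ α ^ (σ' ^ (4*s)) := Nat.pow_le_pow_right (by omega) hexpbound
  have htfin : t ^ (σ'*s - 1) ≤ t ^ (σ' ^ (4*s) - 1) := by
    apply Nat.pow_le_pow_right ht
    have h1 : σ'*s ≤ σ'*σ' := Nat.mul_le_mul_left _ hσ's
    have h2 : σ'*σ' ≤ σ' ^ (4*s) := by
      calc σ'*σ' = σ' ^ 2 := by ring
      _ ≤ σ' ^ (4*s) := Nat.pow_le_pow_right (by omega) (by omega)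
    omega
  calc ((r+1) * (A1 ^ σ' * t ^ (σ'-1) + α)) ^ s * t ^ (s-1)
      ≤ (2*(r+1))^s * A1 ^ (σ'*s) * t ^ (σ'*s - 1) := hfinal1
  _ ≤ Q ^ (s + 2*(r+1)*s*(σ'*s)) * t ^ (σ'*s-1) := Nat.mul_le_mul_right _ hmid
  _ ≤ α ^ (σ' ^ (4*s)) * t ^ (σ' ^ (4*s) - 1) := Nat.mul_le_mul hQfin htfin
  _ = α ^ (sigma' s (r+1)) * t ^ (sigma' s (r+1) - 1) := by rw [hσeq]


section Graph

variable {V : Type*} [DecidableEq V] {G : SimpleGraph V}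

lemma ramsey_aux (N : ℕ) : ∀ t m : ℕ, t + m ≤ N → ∀ U : Finset V, t ^ m ≤ U.card →
      (∃ K ⊆ U, K.card = t ∧ ∀ x ∈ K, ∀ y ∈ K, x ≠ y → G.Adj x y) ∨
      (∃ W ⊆ U, W.card = m + 1 ∧ ∀ x ∈ W, ∀ y ∈ W, ¬ G.Adj x y) := by
  classical
  induction N with
  | zero =>
    intro t m hN U hU
    obtain rfl : t = 0 := by omega
    exact Or.inl ⟨∅, Finset.empty_subset _, rfl, by simp⟩
  | succ N ih =>
    intro t m hN U hU
    rcases Nat.eq_zero_or_pos t with rfl | htpos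
    · exact Or.inl ⟨∅, Finset.empty_subset _, rfl, by simp⟩
    rcases Nat.eq_zero_or_pos m with rfl | hmpos
    · -- U nonempty, single vertex stable
      have : 1 ≤ U.card := by simpa using hU
      obtain ⟨v, hv⟩ := Finset.card_pos.mp this
      refine Or.inr ⟨{v}, by simpa using hv, by simp, ?_⟩
      intro x hx y hy
      simp only [Finset.mem_singleton] at hx hy
      subst hx; subst hy; exact G.irrefl
    -- main case
    have hUpos : 0 < U.card := lt_of_lt_of_le (Nat.pow_pos (n := m) htpos) hU
    obtain ⟨v, hv⟩ := Finset.card_pos.mp hUpos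
    set Nv := (U.erase v).filter (fun u => G.Adj v u) with hNv
    set Mv := (U.erase v).filter (fun u => ¬ G.Adj v u) with hMv
    have hsplit : Nv.card + Mv.card = U.card - 1 := by
      rw [hNv, hMv, Finset.card_filter_add_card_filter_not]
      rw [Finset.card_erase_of_mem hv]
    by_cases h1 : (t-1) ^ m ≤ Nv.card
    · rcases ih (t-1) m (by omega) Nv h1 with ⟨K, hKsub, hKcard, hKcl⟩ | hst
      · left
        have hvK : v ∉ K := fun h => (Finset.mem_erase.mp ((Finset.filter_subset _ _) (hKsub h))).1 rfl
        refine ⟨insert v K, ?_, ?_, ?_⟩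
        · intro x hx
          rcases Finset.mem_insert.mp hx with rfl | hx
          · exact hv
          · exact (Finset.erase_subset _ _) ((Finset.filter_subset _ _) (hKsub hx))
        · rw [Finset.card_insert_of_notMem hvK, hKcard]; omega
        · have hadj : ∀ x ∈ K, G.Adj v x := fun x hx => (Finset.mem_filter.mp (hKsub hx)).2
          intro x hx y hy hxy
          rcases Finset.mem_insert.mp hx with hx' | hx' <;>
            rcases Finset.mem_insert.mp hy with hy' | hy'
          · exact absurd (hx'.trans hy'.symm) hxy
          · rw [hx']; exact hadj y hy'
          · rw [hy']; exact (hadj x hx').symm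
          · exact hKcl x hx' y hy' hxy
      · right
        obtain ⟨W, hWsub, hWcard, hWst⟩ := hst
        exact ⟨W, hWsub.trans ((Finset.filter_subset _ _).trans (Finset.erase_subset _ _)), hWcard, hWst⟩
    · by_cases h2 : t ^ (m-1) ≤ Mv.card
      · rcases ih t (m-1) (by omega) Mv h2 with hcl | ⟨W, hWsub, hWcard, hWst⟩
        · left
          obtain ⟨K, hKsub, hKcard, hKcl⟩ := hcl
          exact ⟨K, hKsub.trans ((Finset.filter_subset _ _).trans (Finset.erase_subset _ _)), hKcard, hKcl⟩
        · right
          have hvW : v ∉ W := fun h => (Finset.mem_erase.mp ((Finset.filter_subset _ _) (hWsub h))).1 rfl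
          refine ⟨insert v W, ?_, ?_, ?_⟩
          · intro x hx
            rcases Finset.mem_insert.mp hx with rfl | hx
            · exact hv
            · exact (Finset.erase_subset _ _) ((Finset.filter_subset _ _) (hWsub hx))
          · rw [Finset.card_insert_of_notMem hvW, hWcard]; omega
          · have hnadj : ∀ x ∈ W, ¬ G.Adj v x := fun x hx => (Finset.mem_filter.mp (hWsub hx)).2
            intro x hx y hy
            rcases Finset.mem_insert.mp hx with hx' | hx' <;>
              rcases Finset.mem_insert.mp hy with hy' | hy'
            · rw [hx', hy']; exact G.irrefl
            · rw [hx']; exact hnadj y hy'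
            · rw [hy']; exact fun h => hnadj x hx' h.symm
            · exact hWst x hx' y hy'
      · exfalso
        have hps := pow_step t m htpos hmpos
        omega

lemma ramsey (t m : ℕ) (U : Finset V) (hU : t ^ m ≤ U.card) :
      (∃ K ⊆ U, K.card = t ∧ ∀ x ∈ K, ∀ y ∈ K, x ≠ y → G.Adj x y) ∨
      (∃ W ⊆ U, W.card = m + 1 ∧ ∀ x ∈ W, ∀ y ∈ W, ¬ G.Adj x y) :=
  ramsey_aux (t+m) t m le_rfl U hU


lemma small_of_no_stable (t : ℕ)
    (hclique : ¬ ∃ K : Finset V, G.IsNClique t K) (m : ℕ) (D : Finset V)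
    (h : ¬ ∃ W ⊆ D, W.card = m + 1 ∧ ∀ x ∈ W, ∀ y ∈ W, ¬ G.Adj x y) :
    D.card < t ^ m := by
  by_contra h'
  push_neg at h'
  rcases ramsey t m D h' with ⟨K, _, hKc, hKcl⟩ | hst
  · exact hclique ⟨K, by
      constructor
      · intro x hx y hy hxy
        exact hKcl x (Finset.mem_coe.mp hx) y (Finset.mem_coe.mp hy) hxy
      · exact hKc⟩
  · exact h hst

lemma lemA (s t β : ℕ) (hs : 1 ≤ s) (ht : 1 ≤ t) (hβ : 1 ≤ β)
    (hKss : KssFree G s)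
    (hclique : ¬ ∃ K : Finset V, G.IsNClique t K)
    (U : Finset V) (hU : β ^ s * t ^ (s-1) ≤ U.card) :
    ∃ W ⊆ U, W.card = β ∧ ∀ x ∈ W, ∀ y ∈ W, ¬ G.Adj x y := by
  classical
  by_contra hno
  -- maximal stable subset S of U
  have h𝒮ne : (U.powerset.filter (fun S => ∀ x ∈ S, ∀ y ∈ S, ¬ G.Adj x y)).Nonempty :=
    ⟨∅, by simp⟩
  obtain ⟨S, hSmem, hSmax⟩ := Finset.exists_max_image _ Finset.card h𝒮ne
  simp only [Finset.mem_filter, Finset.mem_powerset] at hSmem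
  obtain ⟨hSU, hSst⟩ := hSmem
  have hSmax' : ∀ S' ⊆ U, (∀ x ∈ S', ∀ y ∈ S', ¬ G.Adj x y) → S'.card ≤ S.card := by
    intro S' h1 h2
    exact hSmax S' (by simp only [Finset.mem_filter, Finset.mem_powerset]; exact ⟨h1, h2⟩)
  have hScard : S.card ≤ β - 1 := by
    by_contra hc
    push_neg at hc
    have : β ≤ S.card := by omega
    obtain ⟨W, hWS, hWc⟩ := Finset.exists_subset_card_eq this
    exact hno ⟨W, hWS.trans hSU, hWc, fun x hx y hy => hSst x (hWS hx) y (hWS hy)⟩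
  -- traces
  set τ : V → Finset V := fun v => S.filter (fun u => G.Adj v u) with hτ
  have hτne : ∀ v ∈ U \ S, (τ v).Nonempty := by
    intro v hv
    obtain ⟨hvU, hvS⟩ := Finset.mem_sdiff.mp hv
    by_contra hemp
    rw [Finset.not_nonempty_iff_eq_empty, Finset.filter_eq_empty_iff] at hemp
    have hstab : ∀ x ∈ insert v S, ∀ y ∈ insert v S, ¬ G.Adj x y := by
      intro x hx y hy
      rcases Finset.mem_insert.mp hx with hx' | hx' <;>
        rcases Finset.mem_insert.mp hy with hy' | hy'
      · rw [hx', hy']; exact G.irrefl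
      · rw [hx']; exact hemp hy'
      · rw [hy']; exact fun h => hemp hx' h.symm
      · exact hSst x hx' y hy'
    have hins : (insert v S).card ≤ S.card :=
      hSmax' _ (Finset.insert_subset hvU hSU) hstab
    rw [Finset.card_insert_of_notMem hvS] at hins
    omega
  have hτS : ∀ v, τ v ⊆ S := fun v => Finset.filter_subset _ _
  -- the cover
  set Pfam : Finset (Finset V) :=
    S.powerset.filter (fun T => T.Nonempty ∧ T.card ≤ s) with hPfam
  set cover : Finset V → Finset V := fun T =>
    (U \ S).filter (fun v => (∀ u ∈ T, G.Adj v u) ∧ (τ v = T ∨ T.card = s)) with hcover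
  have hcov : U \ S ⊆ Pfam.biUnion cover := by
    intro v hv
    rw [Finset.mem_biUnion]
    by_cases hc : (τ v).card ≤ s
    · refine ⟨τ v, ?_, ?_⟩
      · rw [hPfam, Finset.mem_filter, Finset.mem_powerset]
        exact ⟨hτS v, hτne v hv, hc⟩
      · rw [hcover, Finset.mem_filter]
        refine ⟨hv, fun u hu => (Finset.mem_filter.mp hu).2, Or.inl rfl⟩
    · push_neg at hc
      obtain ⟨T, hTτ, hTc⟩ := Finset.exists_subset_card_eq (le_of_lt hc)
      refine ⟨T, ?_, ?_⟩
      · rw [hPfam, Finset.mem_filter, Finset.mem_powerset]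
        exact ⟨hTτ.trans (hτS v), Finset.card_pos.mp (by omega), by omega⟩
      · rw [hcover, Finset.mem_filter]
        exact ⟨hv, fun u hu => (Finset.mem_filter.mp (hTτ hu)).2, Or.inr hTc⟩
  -- bound on each cover piece
  have hbound : ∀ T ∈ Pfam, (cover T).card ≤ t ^ (s-1) - 1 := by
    intro T hT
    rw [hPfam, Finset.mem_filter, Finset.mem_powerset] at hT
    obtain ⟨hTS, hTne, hTs⟩ := hT
    by_cases hTcs : T.card = s
    · -- common neighbourhood of a stable s-set: no stable s-subset
      have hnost : ¬ ∃ W ⊆ cover T, W.card = (s-1) + 1 ∧ ∀ x ∈ W, ∀ y ∈ W, ¬ G.Adj x y := by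
        rintro ⟨W, hWsub, hWc, hWst⟩
        have hWc' : W.card = s := by omega
        apply hKss
        refine ⟨T, W, hTcs, hWc', ?_, ?_, ?_, ?_⟩
        · -- disjoint : T ⊆ S, W ⊆ U \ S
          rw [Finset.disjoint_left]
          intro a haT haW
          have := (Finset.mem_sdiff.mp ((Finset.filter_subset _ _) (hWsub haW))).2
          exact this (hTS haT)
        · intro a ha b hb
          have hb' := Finset.mem_filter.mp (hWsub hb)
          exact (hb'.2.1 a ha).symm
        · intro a ha a' ha'
          exact hSst a (hTS ha) a' (hTS ha')
        · exact hWst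
      have := small_of_no_stable t hclique (s-1) (cover T) hnost
      omega
    · -- exact trace T, with T.card ≤ s-1 : maximality bound
      have hTlt : T.card ≤ s - 1 := by omega
      have hnost : ¬ ∃ W ⊆ cover T, W.card = T.card + 1 ∧ ∀ x ∈ W, ∀ y ∈ W, ¬ G.Adj x y := by
        rintro ⟨W, hWsub, hWc, hWst⟩
        have hWUS : W ⊆ U \ S := hWsub.trans (Finset.filter_subset _ _)
        have hτW : ∀ w ∈ W, τ w = T := by
          intro w hw
          have := (Finset.mem_filter.mp (hWsub hw)).2.2
          rcases this with h | h
          · exact h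
          · exact absurd h hTcs
        -- S' := (S \ T) ∪ W is a bigger stable set
        have hdisj : Disjoint (S \ T) W := by
          rw [Finset.disjoint_left]
          intro a ha haW
          exact (Finset.mem_sdiff.mp (hWUS haW)).2 (Finset.mem_sdiff.mp ha).1
        have hstab : ∀ x ∈ (S \ T) ∪ W, ∀ y ∈ (S \ T) ∪ W, ¬ G.Adj x y := by
          have key : ∀ x ∈ S \ T, ∀ y ∈ W, ¬ G.Adj x y := by
            intro x hx y hy hadj
            obtain ⟨hxS, hxT⟩ := Finset.mem_sdiff.mp hx
            have : x ∈ τ y := by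
              rw [hτ]; exact Finset.mem_filter.mpr ⟨hxS, hadj.symm⟩
            rw [hτW y hy] at this
            exact hxT this
          intro x hx y hy
          rcases Finset.mem_union.mp hx with hx' | hx' <;>
            rcases Finset.mem_union.mp hy with hy' | hy'
          · exact hSst x (Finset.mem_sdiff.mp hx').1 y (Finset.mem_sdiff.mp hy').1
          · exact key x hx' y hy'
          · exact fun h => key y hy' x hx' h.symm
          · exact hWst x hx' y hy'
        have hsub : (S \ T) ∪ W ⊆ U := by
          intro a ha
          rcases Finset.mem_union.mp ha with h | h
          · exact hSU (Finset.mem_sdiff.mp h).1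
          · exact (Finset.mem_sdiff.mp (hWUS h)).1
        have hcard := hSmax' _ hsub hstab
        rw [Finset.card_union_of_disjoint hdisj, Finset.card_sdiff_of_subset hTS, hWc] at hcard
        have hTS' : T.card ≤ S.card := Finset.card_le_card hTS
        omega
      have := small_of_no_stable t hclique T.card (cover T) hnost
      have hmono : t ^ T.card ≤ t ^ (s-1) := Nat.pow_le_pow_right ht hTlt
      omega
  -- count
  have hUS : (U \ S).card ≤ Pfam.card * (t ^ (s-1) - 1) := by
    calc (U \ S).card ≤ (Pfam.biUnion cover).card := Finset.card_le_card hcov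
    _ ≤ ∑ T ∈ Pfam, (cover T).card := Finset.card_biUnion_le
    _ ≤ ∑ T ∈ Pfam, (t ^ (s-1) - 1) := Finset.sum_le_sum hbound
    _ = Pfam.card * (t ^ (s-1) - 1) := by rw [Finset.sum_const, smul_eq_mul]
  have hPfamcard : Pfam.card ≤ β ^ s - 1 := by
    have hsub : insert ∅ Pfam ⊆ S.powerset.filter (fun T => T.card ≤ s) := by
      intro T hT
      rcases Finset.mem_insert.mp hT with rfl | hT
      · simp
      · rw [hPfam, Finset.mem_filter] at hT
        exact Finset.mem_filter.mpr ⟨hT.1, hT.2.2⟩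
    have hemp : ∅ ∉ Pfam := by
      rw [hPfam, Finset.mem_filter]
      rintro ⟨-, h, -⟩
      exact Finset.not_nonempty_empty h
    have h1 : Pfam.card + 1 ≤ (S.powerset.filter (fun T => T.card ≤ s)).card := by
      rw [← Finset.card_insert_of_notMem hemp]
      exact Finset.card_le_card hsub
    have h2 : S.powerset.filter (fun T => T.card ≤ s) ⊆
        (Finset.range (s+1)).biUnion (fun j => Finset.powersetCard j S) := by
      intro T hT
      rw [Finset.mem_filter, Finset.mem_powerset] at hT
      rw [Finset.mem_biUnion]
      exact ⟨T.card, Finset.mem_range.mpr (by omega),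
        Finset.mem_powersetCard.mpr ⟨hT.1, rfl⟩⟩
    have h3 : (S.powerset.filter (fun T => T.card ≤ s)).card ≤ (S.card + 1) ^ s := by
      calc (S.powerset.filter (fun T => T.card ≤ s)).card
          ≤ ((Finset.range (s+1)).biUnion (fun j => Finset.powersetCard j S)).card :=
            Finset.card_le_card h2
        _ ≤ ∑ j ∈ Finset.range (s+1), (Finset.powersetCard j S).card := Finset.card_biUnion_le
        _ = ∑ j ∈ Finset.range (s+1), Nat.choose S.card j := by
            apply Finset.sum_congr rfl
            intro j _
            rw [Finset.card_powersetCard]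
        _ ≤ (S.card + 1) ^ s := sum_choose_le S.card s
    have h4 : (S.card + 1) ^ s ≤ β ^ s := Nat.pow_le_pow_left (by omega) s
    omega
  -- final contradiction
  have hUcard : U.card = S.card + (U \ S).card := by
    rw [Finset.card_sdiff_of_subset hSU]
    have := Finset.card_le_card hSU
    omega
  have hple : β ≤ β ^ s := Nat.le_self_pow (by omega) β
  have hppos : 1 ≤ β ^ s := by omega
  have hqpos : 1 ≤ t ^ (s-1) := Nat.one_le_pow _ _ (by omega)
  obtain ⟨p, hp⟩ : ∃ p, β ^ s = p + 1 := ⟨β ^ s - 1, by omega⟩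
  obtain ⟨q, hq⟩ : ∃ q, t ^ (s-1) = q + 1 := ⟨t ^ (s-1) - 1, by omega⟩
  rw [hp, hq] at hU
  have hUS' : (U \ S).card ≤ (β ^ s - 1) * q := by
    calc (U \ S).card ≤ Pfam.card * (t ^ (s-1) - 1) := hUS
    _ ≤ (β ^ s - 1) * (t^(s-1) - 1) := Nat.mul_le_mul_right _ hPfamcard
    _ = (β ^ s - 1) * q := by rw [hq]; simp
  rw [hp] at hUS'
  simp only [Nat.add_sub_cancel] at hUS'
  have hexp : (p+1) * (q+1) = p * q + p + q + 1 := by ring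
  omega


lemma finish_in (s : ℕ)
    (hKss : KssFree G s)
    (𝒵 : Finset (Finset V)) (mark : Finset V → V)
    (hmark : ∀ X ∈ 𝒵, mark X ∈ X)
    (hdisjZ : ∀ X ∈ 𝒵, ∀ Y ∈ 𝒵, X ≠ Y → Disjoint X Y)
    (hMstab : ∀ X ∈ 𝒵, ∀ Y ∈ 𝒵, ¬ G.Adj (mark X) (mark Y))
    (𝒜 : Finset (Finset V)) (B : Finset V)
    (h𝒜Z : 𝒜 ⊆ 𝒵)
    (hBs : ∀ b ∈ B, ∃ P ∈ 𝒵, b ∈ P.erase (mark P) ∧ ∀ X ∈ 𝒜, P ≠ X)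
    (hBm : ∀ b ∈ B, ∀ X ∈ 𝒜, G.Adj b (mark X))
    (hBstab : ∀ b ∈ B, ∀ b' ∈ B, ¬ G.Adj b b')
    (hBc : s ≤ B.card) (h𝒜c : s ≤ 𝒜.card) : False := by
  classical
  obtain ⟨B', hB'B, hB'c⟩ := Finset.exists_subset_card_eq hBc
  obtain ⟨𝒜s, h𝒜s, h𝒜sc⟩ := Finset.exists_subset_card_eq h𝒜c
  apply hKss
  refine ⟨B', 𝒜s.image mark, hB'c, ?_, ?_, ?_, ?_, ?_⟩
  · rw [Finset.card_image_of_injOn]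
    · exact h𝒜sc
    · intro X hX Y hY hXY
      by_contra hne
      have hXZ : X ∈ 𝒵 := h𝒜Z (h𝒜s hX)
      have hYZ : Y ∈ 𝒵 := h𝒜Z (h𝒜s hY)
      exact Finset.disjoint_left.mp (hdisjZ X hXZ Y hYZ hne) (hmark X hXZ)
        (by rw [hXY]; exact hmark Y hYZ)
  · rw [Finset.disjoint_left]
    intro b hbB' hbM
    obtain ⟨X, hX𝒜s, hbX⟩ := Finset.mem_image.mp hbM
    obtain ⟨P, hPZ, hbP, hPne⟩ := hBs b (hB'B hbB')
    have hXZ : X ∈ 𝒵 := h𝒜Z (h𝒜s hX𝒜s)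
    have hPX : P ≠ X := hPne X (h𝒜s hX𝒜s)
    apply Finset.disjoint_left.mp (hdisjZ P hPZ X hXZ hPX)
      (Finset.mem_of_mem_erase hbP)
    rw [← hbX]; exact hmark X hXZ
  · intro a ha b hb
    obtain ⟨X, hX𝒜s, hbX⟩ := Finset.mem_image.mp hb
    rw [← hbX]
    exact hBm a (hB'B ha) X (h𝒜s hX𝒜s)
  · intro a ha a' ha'
    exact hBstab a (hB'B ha) a' (hB'B ha')
  · intro b hb b' hb'
    obtain ⟨X, hX, hbX⟩ := Finset.mem_image.mp hb
    obtain ⟨Y, hY, hbY⟩ := Finset.mem_image.mp hb'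
    rw [← hbX, ← hbY]
    exact hMstab X (h𝒜Z (h𝒜s hX)) Y (h𝒜Z (h𝒜s hY))


/-- FINISH-OUT: if we have collected a stable set `O` of `k' = ρ(s-1)+1` pivot marks each of
which has a neighbour in the rest of every active set, we find an induced `K_{s,s}`. -/
lemma finish_out (s ρ : ℕ) (hs : 2 ≤ s) (hρ : 1 ≤ ρ)
    (hKss : KssFree G s)
    (𝒵 : Finset (Finset V)) (mark : Finset V → V)
    (hmark : ∀ X ∈ 𝒵, mark X ∈ X)
    (hsize : ∀ X ∈ 𝒵, X.card ≤ ρ + 1)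
    (hdisjZ : ∀ X ∈ 𝒵, ∀ Y ∈ 𝒵, X ≠ Y → Disjoint X Y)
    (hMstab : ∀ X ∈ 𝒵, ∀ Y ∈ 𝒵, ¬ G.Adj (mark X) (mark Y))
    (hRanti : ∀ X ∈ 𝒵, ∀ Y ∈ 𝒵, X ≠ Y →
       ∀ u ∈ X.erase (mark X), ∀ v ∈ Y.erase (mark Y), ¬ G.Adj u v)
    (𝒜 : Finset (Finset V)) (O : Finset V)
    (h𝒜Z : 𝒜 ⊆ 𝒵)
    (hOs : ∀ o ∈ O, ∃ P ∈ 𝒵, mark P = o ∧ ∀ X ∈ 𝒜, P ≠ X)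
    (hOm : ∀ o ∈ O, ∀ X ∈ 𝒜, ∃ y ∈ X.erase (mark X), G.Adj o y)
    (hOc : O.card = ρ*(s-1)+1)
    (h𝒜c : s * Nat.choose (ρ*(s-1)+1) s ≤ 𝒜.card) : False := by
  classical
  set k' := ρ*(s-1)+1 with hk'
  -- for each active set, a popular vertex in its rest adjacent to an s-subset of O
  have hpop : ∀ X ∈ 𝒜, ∃ p : V × Finset V, p.1 ∈ X.erase (mark X) ∧
      p.2 ⊆ O ∧ p.2.card = s ∧ ∀ o ∈ p.2, G.Adj o p.1 := by
    intro X hX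
    have hXZ := h𝒜Z hX
    have hcover : O ⊆ (X.erase (mark X)).biUnion
        (fun y => O.filter (fun o => G.Adj o y)) := by
      intro o ho
      obtain ⟨y, hy, hadj⟩ := hOm o ho X hX
      exact Finset.mem_biUnion.mpr ⟨y, hy, Finset.mem_filter.mpr ⟨ho, hadj⟩⟩
    have hec : (X.erase (mark X)).card ≤ ρ := by
      rw [Finset.card_erase_of_mem (hmark X hXZ)]
      have := hsize X hXZ
      omega
    have hy : ∃ y ∈ X.erase (mark X), s ≤ (O.filter (fun o => G.Adj o y)).card := by
      by_contra hcon
      push_neg at hcon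
      have hsmall : ∀ y ∈ X.erase (mark X), (O.filter (fun o => G.Adj o y)).card ≤ s - 1 := by
        intro y hy
        have := hcon y hy
        omega
      have : O.card ≤ ρ * (s-1) := by
        calc O.card ≤ ((X.erase (mark X)).biUnion (fun y => O.filter (fun o => G.Adj o y))).card :=
              Finset.card_le_card hcover
        _ ≤ ∑ y ∈ X.erase (mark X), (O.filter (fun o => G.Adj o y)).card := Finset.card_biUnion_le
        _ ≤ ∑ y ∈ X.erase (mark X), (s-1) := Finset.sum_le_sum hsmall
        _ = (X.erase (mark X)).card * (s-1) := by rw [Finset.sum_const, smul_eq_mul]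
        _ ≤ ρ * (s-1) := Nat.mul_le_mul_right _ hec
      omega
    obtain ⟨y, hyX, hsc⟩ := hy
    obtain ⟨I, hIsub, hIc⟩ := Finset.exists_subset_card_eq hsc
    exact ⟨⟨y, I⟩, hyX, hIsub.trans (Finset.filter_subset _ _), hIc,
      fun o ho => (Finset.mem_filter.mp (hIsub ho)).2⟩
  -- dead code below removed
  /- old: -/
  /-
    have : O.card ≤ ρ * (s-1) := by
      calc O.card ≤ ((X.erase (mark X)).biUnion (fun y => O.filter (fun o => G.Adj o y))).card :=
            Finset.card_le_card hcover
      _ ≤ ∑ y ∈ X.erase (mark X), (O.filter (fun o => G.Adj o y)).card := Finset.card_biUnion_le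
      _ ≤ ∑ y ∈ X.erase (mark X), (s-1) := Finset.sum_le_sum hsmall
      _ = (X.erase (mark X)).card * (s-1) := by rw [Finset.sum_const, smul_eq_mul]
      _ ≤ ρ * (s-1) := Nat.mul_le_mul_right _ hec
    omega
  -/
  -- choice function
  have hne : Nonempty V := ⟨mark ∅⟩
  set F : Finset V → V × Finset V := fun X =>
    if h : ∃ p : V × Finset V, p.1 ∈ X.erase (mark X) ∧
        p.2 ⊆ O ∧ p.2.card = s ∧ ∀ o ∈ p.2, G.Adj o p.1 then h.choose
    else (mark ∅, ∅) with hF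
  have hFprop : ∀ X ∈ 𝒜, (F X).1 ∈ X.erase (mark X) ∧ (F X).2 ⊆ O ∧ (F X).2.card = s ∧
      ∀ o ∈ (F X).2, G.Adj o (F X).1 := by
    intro X hX
    have h := hpop X hX
    rw [hF]
    simp only [dif_pos h]
    exact h.choose_spec
  -- pigeonhole on the s-subsets of O
  have hmaps : ∀ X ∈ 𝒜, (F X).2 ∈ O.powersetCard s := by
    intro X hX
    obtain ⟨-, h1, h2, -⟩ := hFprop X hX
    exact Finset.mem_powersetCard.mpr ⟨h1, h2⟩
  have hPCne : (O.powersetCard s).Nonempty :=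
    Finset.powersetCard_nonempty.mpr (by rw [hOc]; calc s ≤ (s-1) + 1 := by omega
      _ ≤ ρ*(s-1)+1 := by have := Nat.le_mul_of_pos_left (s-1) hρ; omega)
  have hcount : (O.powersetCard s).card * s ≤ 𝒜.card := by
    rw [Finset.card_powersetCard, hOc]
    calc Nat.choose (ρ*(s-1)+1) s * s = s * Nat.choose (ρ*(s-1)+1) s := Nat.mul_comm _ _
    _ ≤ 𝒜.card := h𝒜c
  obtain ⟨I, hI, hfib⟩ := Finset.exists_le_card_fiber_of_mul_le_card_of_maps_to hmaps hPCne hcount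
  obtain ⟨𝒜s, h𝒜sub, h𝒜sc⟩ := Finset.exists_subset_card_eq hfib
  have h𝒜s𝒜 : 𝒜s ⊆ 𝒜 := h𝒜sub.trans (Finset.filter_subset _ _)
  have hIfix : ∀ X ∈ 𝒜s, (F X).2 = I := fun X hX => (Finset.mem_filter.mp (h𝒜sub hX)).2
  obtain ⟨hIO, hIc⟩ := Finset.mem_powersetCard.mp hI
  -- build the K_{s,s}
  apply hKss
  refine ⟨I, 𝒜s.image (fun X => (F X).1), hIc, ?_, ?_, ?_, ?_, ?_⟩
  · rw [Finset.card_image_of_injOn]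
    · exact h𝒜sc
    · intro X hX Y hY hXY
      by_contra hne'
      have hXZ := h𝒜Z (h𝒜s𝒜 hX)
      have hYZ := h𝒜Z (h𝒜s𝒜 hY)
      have h1 : (F X).1 ∈ X := Finset.mem_of_mem_erase (hFprop X (h𝒜s𝒜 hX)).1
      have h2 : (F Y).1 ∈ Y := Finset.mem_of_mem_erase (hFprop Y (h𝒜s𝒜 hY)).1
      have hXY' : (F X).1 = (F Y).1 := hXY
      have h2' : (F X).1 ∈ Y := by rw [hXY']; exact h2
      exact Finset.disjoint_left.mp (hdisjZ X hXZ Y hYZ hne') h1 h2'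
  · -- disjoint I (image)
    rw [Finset.disjoint_left]
    intro o hoI hoim
    obtain ⟨X, hX, hoX⟩ := Finset.mem_image.mp hoim
    obtain ⟨P, hPZ, hPo, hPne⟩ := hOs o (hIO hoI)
    have hXZ := h𝒜Z (h𝒜s𝒜 hX)
    have hPX : P ≠ X := hPne X (h𝒜s𝒜 hX)
    have h3 : o ∈ P := by rw [← hPo]; exact hmark P hPZ
    have h4 : o ∈ X := by
      rw [← hoX]
      exact Finset.mem_of_mem_erase (hFprop X (h𝒜s𝒜 hX)).1
    exact Finset.disjoint_left.mp (hdisjZ P hPZ X hXZ hPX) h3 h4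
  · -- complete
    intro o ho b hb
    obtain ⟨X, hX, hbX⟩ := Finset.mem_image.mp hb
    obtain ⟨-, -, -, hadj⟩ := hFprop X (h𝒜s𝒜 hX)
    rw [← hbX]
    apply hadj
    rw [hIfix X hX]
    exact ho
  · -- I stable
    intro o ho o' ho'
    obtain ⟨P, hPZ, hPo, -⟩ := hOs o (hIO ho)
    obtain ⟨P', hP'Z, hP'o, -⟩ := hOs o' (hIO ho')
    rw [← hPo, ← hP'o]
    exact hMstab P hPZ P' hP'Z
  · -- image stable
    intro b hb b' hb'
    obtain ⟨X, hX, hbX⟩ := Finset.mem_image.mp hb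
    obtain ⟨Y, hY, hbY⟩ := Finset.mem_image.mp hb'
    by_cases hXY : X = Y
    · rw [← hbX, ← hbY, hXY]
      exact G.irrefl
    · rw [← hbX, ← hbY]
      exact hRanti X (h𝒜Z (h𝒜s𝒜 hX)) Y (h𝒜Z (h𝒜s𝒜 hY)) hXY _
        (hFprop X (h𝒜s𝒜 hX)).1 _ (hFprop Y (h𝒜s𝒜 hY)).1


/-- One step of the machine: either extend `O` (an out-pivot) or extend `B` (an in-vertex),
keeping a large active family. -/
lemma machine_step (s ρ α : ℕ) (hρ : 1 ≤ ρ) (hα : 2 ≤ α)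
    (𝒵 : Finset (Finset V)) (mark : Finset V → V)
    (hdisjZ : ∀ X ∈ 𝒵, ∀ Y ∈ 𝒵, X ≠ Y → Disjoint X Y)
    (hsize : ∀ X ∈ 𝒵, X.card ≤ ρ + 1)
    (hmark : ∀ X ∈ 𝒵, mark X ∈ X)
    (hMstab : ∀ X ∈ 𝒵, ∀ Y ∈ 𝒵, ¬ G.Adj (mark X) (mark Y))
    (hRanti : ∀ X ∈ 𝒵, ∀ Y ∈ 𝒵, X ≠ Y →
       ∀ u ∈ X.erase (mark X), ∀ v ∈ Y.erase (mark Y), ¬ G.Adj u v)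
    (hno : ¬ ∃ 𝒲 ⊆ 𝒵, 𝒲.card = α ∧
       ∀ X ∈ 𝒲, ∀ Y ∈ 𝒲, X ≠ Y → ∀ u ∈ X, ∀ v ∈ Y, ¬ G.Adj u v)
    (𝒜 : Finset (Finset V)) (h𝒜Z : 𝒜 ⊆ 𝒵)
    (M : ℕ) (hM : 1 ≤ M) (hcard : 4*α*ρ*M ≤ 𝒜.card) :
    ∃ D₀ ∈ 𝒜, ∃ 𝒜' ⊆ 𝒜.erase D₀, M ≤ 𝒜'.card ∧
      ((∀ X ∈ 𝒜', ∃ u ∈ X.erase (mark X), G.Adj (mark D₀) u) ∨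
       (∃ b ∈ D₀.erase (mark D₀), ∀ X ∈ 𝒜', G.Adj b (mark X))) := by
  classical
  -- maximum anticomplete subfamily
  have h𝒜ne : 𝒜.Nonempty := by
    apply Finset.card_pos.mp
    have : 0 < 4*α*ρ*M := by positivity
    omega
  obtain ⟨X₀, hX₀⟩ := h𝒜ne
  have hPne : (𝒜.powerset.filter (fun 𝒟 => ∀ X ∈ 𝒟, ∀ Y ∈ 𝒟, X ≠ Y →
      ∀ u ∈ X, ∀ v ∈ Y, ¬ G.Adj u v)).Nonempty := by
    refine ⟨{X₀}, ?_⟩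
    simp only [Finset.mem_filter, Finset.mem_powerset]
    constructor
    · intro a ha; rw [Finset.mem_singleton.mp ha]; exact hX₀
    · intro X hX Y hY hXY
      rw [Finset.mem_singleton.mp hX, Finset.mem_singleton.mp hY] at hXY
      exact absurd rfl hXY
  obtain ⟨𝒟, h𝒟mem, h𝒟max⟩ := Finset.exists_max_image _ Finset.card hPne
  simp only [Finset.mem_filter, Finset.mem_powerset] at h𝒟mem
  obtain ⟨h𝒟𝒜, h𝒟anti⟩ := h𝒟mem
  have h𝒟card : 𝒟.card ≤ α - 1 := by
    by_contra hc
    push_neg at hc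
    obtain ⟨𝒟', h𝒟'sub, h𝒟'c⟩ := Finset.exists_subset_card_eq (by omega : α ≤ 𝒟.card)
    exact hno ⟨𝒟', (h𝒟'sub.trans h𝒟𝒜).trans h𝒜Z, h𝒟'c,
      fun X hX Y hY hXY => h𝒟anti X (h𝒟'sub hX) Y (h𝒟'sub hY) hXY⟩
  have h𝒟pos : 1 ≤ 𝒟.card := by
    have := h𝒟max {X₀} (by
      simp only [Finset.mem_filter, Finset.mem_powerset]
      constructor
      · intro a ha; rw [Finset.mem_singleton.mp ha]; exact hX₀
      · intro X hX Y hY hXY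
        rw [Finset.mem_singleton.mp hX, Finset.mem_singleton.mp hY] at hXY
        exact absurd rfl hXY)
    simp only [Finset.card_singleton] at this
    exact this
  -- every other member is joined to some member of 𝒟, via mark-rest edges
  have hjoin : ∀ X ∈ 𝒜 \ 𝒟, ∃ p : Finset V × Bool, p.1 ∈ 𝒟 ∧
      ((p.2 = true ∧ ∃ u ∈ X.erase (mark X), G.Adj (mark p.1) u) ∨
       (p.2 = false ∧ ∃ v ∈ p.1.erase (mark p.1), G.Adj v (mark X))) := by
    intro X hX
    obtain ⟨hX𝒜, hX𝒟⟩ := Finset.mem_sdiff.mp hX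
    have hXZ : X ∈ 𝒵 := h𝒜Z hX𝒜
    -- X is not anticomplete to all of 𝒟
    have : ∃ D ∈ 𝒟, ∃ u ∈ X, ∃ v ∈ D, G.Adj u v := by
      by_contra hcon
      push_neg at hcon
      have hins : (insert X 𝒟) ∈ 𝒜.powerset.filter (fun 𝒟 => ∀ X ∈ 𝒟, ∀ Y ∈ 𝒟, X ≠ Y →
          ∀ u ∈ X, ∀ v ∈ Y, ¬ G.Adj u v) := by
        simp only [Finset.mem_filter, Finset.mem_powerset]
        constructor
        · exact Finset.insert_subset hX𝒜 h𝒟𝒜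
        · intro A hA C hC hAC
          rcases Finset.mem_insert.mp hA with hA' | hA' <;>
            rcases Finset.mem_insert.mp hC with hC' | hC'
          · rw [hA', hC'] at hAC; exact absurd rfl hAC
          · rw [hA']
            intro u hu v hv
            exact hcon C hC' u hu v hv
          · rw [hC']
            intro u hu v hv hadj
            exact hcon A hA' v hv u hu hadj.symm
          · exact h𝒟anti A hA' C hC' hAC
      have := h𝒟max _ hins
      rw [Finset.card_insert_of_notMem hX𝒟] at this
      omega
    obtain ⟨D, hD, u, hu, v, hv, hadj⟩ := this
    have hDZ : D ∈ 𝒵 := h𝒜Z (h𝒟𝒜 hD)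
    have hXD : X ≠ D := fun h => hX𝒟 (h ▸ hD)
    by_cases hum : u = mark X <;> by_cases hvm : v = mark D
    · exfalso
      rw [hum, hvm] at hadj
      exact hMstab X hXZ D hDZ hadj
    · refine ⟨⟨D, false⟩, hD, Or.inr ⟨rfl, v, ?_, ?_⟩⟩
      · exact Finset.mem_erase.mpr ⟨hvm, hv⟩
      · rw [← hum]; exact hadj.symm
    · refine ⟨⟨D, true⟩, hD, Or.inl ⟨rfl, u, ?_, ?_⟩⟩
      · exact Finset.mem_erase.mpr ⟨hum, hu⟩
      · rw [← hvm]; exact hadj.symm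
    · exfalso
      exact hRanti X hXZ D hDZ hXD u (Finset.mem_erase.mpr ⟨hum, hu⟩)
        v (Finset.mem_erase.mpr ⟨hvm, hv⟩) hadj
  -- choice function and first pigeonhole
  set f : Finset V → Finset V × Bool := fun X =>
    if h : ∃ p : Finset V × Bool, p.1 ∈ 𝒟 ∧
      ((p.2 = true ∧ ∃ u ∈ X.erase (mark X), G.Adj (mark p.1) u) ∨
       (p.2 = false ∧ ∃ v ∈ p.1.erase (mark p.1), G.Adj v (mark X)))
    then h.choose else (∅, true) with hf
  have hfprop : ∀ X ∈ 𝒜 \ 𝒟, (f X).1 ∈ 𝒟 ∧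
      (((f X).2 = true ∧ ∃ u ∈ X.erase (mark X), G.Adj (mark (f X).1) u) ∨
       ((f X).2 = false ∧ ∃ v ∈ (f X).1.erase (mark (f X).1), G.Adj v (mark X))) := by
    intro X hX
    have h := hjoin X hX
    rw [hf]
    simp only [dif_pos h]
    exact h.choose_spec
  have hmaps : ∀ X ∈ 𝒜 \ 𝒟, f X ∈ 𝒟 ×ˢ (Finset.univ : Finset Bool) := by
    intro X hX
    rw [Finset.mem_product]
    exact ⟨(hfprop X hX).1, Finset.mem_univ _⟩
  have htne : (𝒟 ×ˢ (Finset.univ : Finset Bool)).Nonempty := by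
    rw [Finset.nonempty_product]
    exact ⟨Finset.card_pos.mp (by omega), ⟨true, Finset.mem_univ _⟩⟩
  have hcount : (𝒟 ×ˢ (Finset.univ : Finset Bool)).card * (ρ * M) ≤ (𝒜 \ 𝒟).card := by
    rw [Finset.card_product]
    have hbool : (Finset.univ : Finset Bool).card = 2 := by simp
    rw [hbool]
    have hsd : (𝒜 \ 𝒟).card = 𝒜.card - 𝒟.card := Finset.card_sdiff_of_subset h𝒟𝒜
    have key : 𝒟.card * 2 * (ρ * M) + (α - 1) ≤ 4*α*ρ*M := by
      have h1 : 𝒟.card * 2 * (ρ * M) ≤ (α-1) * 2 * (ρ * M) :=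
        Nat.mul_le_mul_right _ (Nat.mul_le_mul_right _ h𝒟card)
      have h2 : (α-1) * 2 * (ρ * M) + (α - 1) ≤ 4*α*ρ*M := by
        have e1 : (α-1) * 2 * (ρ*M) + (α-1) ≤ α * 2 * (ρ*M) + α := by
          have : (α-1) * 2 * (ρ*M) ≤ α * 2 * (ρ*M) :=
            Nat.mul_le_mul_right _ (Nat.mul_le_mul_right _ (by omega))
          omega
        have e2 : α * 2 * (ρ*M) + α ≤ 4*α*ρ*M := by
          have hα1 : α ≤ α * 2 * (ρ * M) := by
            calc α = α * 1 := by ring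
            _ ≤ α * (2 * (ρ * M)) := Nat.mul_le_mul_left _ (by
                  have : 0 < 2 * (ρ * M) := by positivity
                  omega)
            _ = α * 2 * (ρ * M) := by ring
          have : α * 2 * (ρ*M) + α ≤ α * 2 * (ρ*M) + α * 2 * (ρ*M) := by omega
          calc α * 2 * (ρ*M) + α ≤ α * 2 * (ρ*M) + α * 2 * (ρ*M) := this
          _ = 4*α*ρ*M := by ring
        omega
      omega
    omega
  obtain ⟨⟨D₀, dir⟩, hD₀mem, hfib⟩ :=
    Finset.exists_le_card_fiber_of_mul_le_card_of_maps_to hmaps htne hcount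
  rw [Finset.mem_product] at hD₀mem
  have hD₀𝒟 : D₀ ∈ 𝒟 := hD₀mem.1
  have hD₀𝒜 : D₀ ∈ 𝒜 := h𝒟𝒜 hD₀𝒟
  have hD₀Z : D₀ ∈ 𝒵 := h𝒜Z hD₀𝒜
  set fib := (𝒜 \ 𝒟).filter (fun X => f X = (D₀, dir)) with hfibdef
  have hfibsub : fib ⊆ 𝒜.erase D₀ := by
    intro X hX
    obtain ⟨hX1, -⟩ := Finset.mem_filter.mp hX
    obtain ⟨hX𝒜, hX𝒟⟩ := Finset.mem_sdiff.mp hX1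
    exact Finset.mem_erase.mpr ⟨fun h => hX𝒟 (h ▸ hD₀𝒟), hX𝒜⟩
  cases dir with
  | true =>
    -- OUT case
    refine ⟨D₀, hD₀𝒜, fib, hfibsub, ?_, Or.inl ?_⟩
    · calc M ≤ ρ * M := Nat.le_mul_of_pos_left _ hρ
      _ ≤ fib.card := hfib
    · intro X hX
      obtain ⟨hX1, hX2⟩ := Finset.mem_filter.mp hX
      obtain ⟨hp1, hp2⟩ := hfprop X hX1
      rw [hX2] at hp2
      rcases hp2 with ⟨-, h⟩ | ⟨habs, -⟩
      · simpa using h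
      · exact absurd habs (by simp)
  | false =>
    -- IN case: second pigeonhole onto the rest of D₀
    have hrest : ∀ X ∈ fib, ∃ v ∈ D₀.erase (mark D₀), G.Adj v (mark X) := by
      intro X hX
      obtain ⟨hX1, hX2⟩ := Finset.mem_filter.mp hX
      obtain ⟨hp1, hp2⟩ := hfprop X hX1
      rw [hX2] at hp2
      rcases hp2 with ⟨habs, -⟩ | ⟨-, h⟩
      · exact absurd habs (by simp)
      · simpa using h
    set g : Finset V → V := fun X =>
      if h : ∃ v, v ∈ D₀.erase (mark D₀) ∧ G.Adj v (mark X) then h.choose else mark ∅ with hg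
    have hgprop : ∀ X ∈ fib, g X ∈ D₀.erase (mark D₀) ∧ G.Adj (g X) (mark X) := by
      intro X hX
      obtain ⟨v, hv1, hv2⟩ := hrest X hX
      have h : ∃ v, v ∈ D₀.erase (mark D₀) ∧ G.Adj v (mark X) := ⟨v, hv1, hv2⟩
      rw [hg]
      simp only [dif_pos h]
      exact h.choose_spec
    have hmaps2 : ∀ X ∈ fib, g X ∈ D₀.erase (mark D₀) := fun X hX => (hgprop X hX).1
    have hne2 : (D₀.erase (mark D₀)).Nonempty := by
      have hfibne : fib.Nonempty := by
        apply Finset.card_pos.mp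
        have : 0 < ρ * M := by positivity
        omega
      obtain ⟨X, hX⟩ := hfibne
      exact ⟨g X, hmaps2 X hX⟩
    have hcount2 : (D₀.erase (mark D₀)).card * M ≤ fib.card := by
      have hec : (D₀.erase (mark D₀)).card ≤ ρ := by
        rw [Finset.card_erase_of_mem (hmark D₀ hD₀Z)]
        have := hsize D₀ hD₀Z
        omega
      calc (D₀.erase (mark D₀)).card * M ≤ ρ * M := Nat.mul_le_mul_right _ hec
      _ ≤ fib.card := hfib
    obtain ⟨b, hb, hfib2⟩ :=
      Finset.exists_le_card_fiber_of_mul_le_card_of_maps_to hmaps2 hne2 hcount2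
    refine ⟨D₀, hD₀𝒜, fib.filter (fun X => g X = b), ?_, hfib2, Or.inr ⟨b, hb, ?_⟩⟩
    · exact (Finset.filter_subset _ _).trans hfibsub
    · intro X hX
      obtain ⟨hX1, hX2⟩ := Finset.mem_filter.mp hX
      have := (hgprop X hX1).2
      rw [hX2] at this
      exact this


lemma machine_aux (s ρ α : ℕ) (hs : 2 ≤ s) (hρ : 1 ≤ ρ) (hα : 2 ≤ α)
    (hKss : KssFree G s)
    (𝒵 : Finset (Finset V)) (mark : Finset V → V)
    (hmark : ∀ X ∈ 𝒵, mark X ∈ X)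
    (hsize : ∀ X ∈ 𝒵, X.card ≤ ρ + 1)
    (hdisjZ : ∀ X ∈ 𝒵, ∀ Y ∈ 𝒵, X ≠ Y → Disjoint X Y)
    (hMstab : ∀ X ∈ 𝒵, ∀ Y ∈ 𝒵, ¬ G.Adj (mark X) (mark Y))
    (hRanti : ∀ X ∈ 𝒵, ∀ Y ∈ 𝒵, X ≠ Y →
       ∀ u ∈ X.erase (mark X), ∀ v ∈ Y.erase (mark Y), ¬ G.Adj u v)
    (hno : ¬ ∃ 𝒲 ⊆ 𝒵, 𝒲.card = α ∧
       ∀ X ∈ 𝒲, ∀ Y ∈ 𝒲, X ≠ Y → ∀ u ∈ X, ∀ v ∈ Y, ¬ G.Adj u v) :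
    ∀ n : ℕ, ∀ (𝒜 : Finset (Finset V)) (O B : Finset V),
    𝒜 ⊆ 𝒵 →
    (∀ o ∈ O, ∃ P ∈ 𝒵, mark P = o ∧ ∀ X ∈ 𝒜, P ≠ X) →
    (∀ o ∈ O, ∀ X ∈ 𝒜, ∃ y ∈ X.erase (mark X), G.Adj o y) →
    (∀ b ∈ B, ∃ P ∈ 𝒵, b ∈ P.erase (mark P) ∧ ∀ X ∈ 𝒜, P ≠ X) →
    (∀ b ∈ B, ∀ X ∈ 𝒜, G.Adj b (mark X)) →
    (∀ b ∈ B, ∀ b' ∈ B, ¬ G.Adj b b') →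
    (s - B.card + ((ρ*(s-1)+1) - O.card) ≤ n) →
    ((4*α*ρ)^n * (s * Nat.choose (ρ*(s-1)+1) s + s + 1) ≤ 𝒜.card) → False := by
  classical
  have hW0s : s ≤ s * Nat.choose (ρ*(s-1)+1) s + s + 1 := by omega
  have hCpos : 1 ≤ 4*α*ρ := by
    have : 0 < 4*α*ρ := by positivity
    omega
  intro n
  induction n with
  | zero =>
    intro 𝒜 O B h𝒜Z hOs hOm hBs hBm hBstab hbud hcard
    simp only [pow_zero, one_mul] at hcard
    exact finish_in s hKss 𝒵 mark hmark hdisjZ hMstab 𝒜 B h𝒜Z hBs hBm hBstab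
      (by omega) (by omega)
  | succ n' ih =>
    intro 𝒜 O B h𝒜Z hOs hOm hBs hBm hBstab hbud hcard
    set k' := ρ*(s-1)+1 with hk'
    set W0 := s * Nat.choose k' s + s + 1 with hW0
    have hTn : (4*α*ρ)^(n'+1) * W0 = 4*α*ρ*((4*α*ρ)^n' * W0) := by ring
    have hW0pos : 1 ≤ W0 := by omega
    have hMpos : 1 ≤ (4*α*ρ)^n' * W0 :=
      Nat.one_le_iff_ne_zero.mpr (by positivity)
    -- finished?
    by_cases hBc : s ≤ B.card
    · refine finish_in s hKss 𝒵 mark hmark hdisjZ hMstab 𝒜 B h𝒜Z hBs hBm hBstab hBc ?_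
      calc s ≤ W0 := hW0s
      _ ≤ (4*α*ρ)^(n'+1) * W0 := Nat.le_mul_of_pos_left _ (by positivity)
      _ ≤ 𝒜.card := hcard
    by_cases hOc : k' ≤ O.card
    · obtain ⟨O', hO'sub, hO'c⟩ := Finset.exists_subset_card_eq hOc
      refine finish_out s ρ hs hρ hKss 𝒵 mark hmark hsize hdisjZ hMstab hRanti 𝒜 O'
        h𝒜Z (fun o ho => hOs o (hO'sub ho)) (fun o ho => hOm o (hO'sub ho)) hO'c ?_
      calc s * Nat.choose k' s ≤ W0 := by omega
      _ ≤ (4*α*ρ)^(n'+1) * W0 := Nat.le_mul_of_pos_left _ (by positivity)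
      _ ≤ 𝒜.card := hcard
    -- the step
    push_neg at hBc hOc
    obtain ⟨D₀, hD₀𝒜, 𝒜', h𝒜'sub, h𝒜'c, hcase⟩ :=
      machine_step s ρ α hρ hα 𝒵 mark hdisjZ hsize hmark hMstab hRanti hno 𝒜 h𝒜Z
        ((4*α*ρ)^n' * W0) hMpos (by rw [← hTn]; exact hcard)
    have h𝒜'𝒜 : 𝒜' ⊆ 𝒜 := h𝒜'sub.trans (Finset.erase_subset _ _)
    have hD₀Z : D₀ ∈ 𝒵 := h𝒜Z hD₀𝒜
    have h𝒜'Z : 𝒜' ⊆ 𝒵 := h𝒜'𝒜.trans h𝒜Z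
    have hD₀not : ∀ X ∈ 𝒜', D₀ ≠ X := by
      intro X hX h
      exact (Finset.mem_erase.mp (h𝒜'sub hX)).1 h.symm
    rcases hcase with hout | ⟨b, hb, hin⟩
    · -- OUT step: add mark D₀ to O
      have hnewO : mark D₀ ∉ O := by
        intro hmem
        obtain ⟨P, hPZ, hPo, hPne⟩ := hOs _ hmem
        have hPD : P ≠ D₀ := hPne D₀ hD₀𝒜
        exact Finset.disjoint_left.mp (hdisjZ P hPZ D₀ hD₀Z hPD)
          (by rw [← hPo]; exact hmark P hPZ) (hmark D₀ hD₀Z)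
      refine ih 𝒜' (insert (mark D₀) O) B h𝒜'Z ?_ ?_ ?_ ?_ hBstab ?_ h𝒜'c
      · intro o ho
        rcases Finset.mem_insert.mp ho with ho' | ho'
        · exact ⟨D₀, hD₀Z, ho'.symm, fun X hX => hD₀not X hX⟩
        · obtain ⟨P, hPZ, hPo, hPne⟩ := hOs o ho'
          exact ⟨P, hPZ, hPo, fun X hX => hPne X (h𝒜'𝒜 hX)⟩
      · intro o ho X hX
        rcases Finset.mem_insert.mp ho with ho' | ho'
        · rw [ho']; exact hout X hX
        · exact hOm o ho' X (h𝒜'𝒜 hX)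
      · intro b hb
        obtain ⟨P, hPZ, hbP, hPne⟩ := hBs b hb
        exact ⟨P, hPZ, hbP, fun X hX => hPne X (h𝒜'𝒜 hX)⟩
      · intro b hb X hX
        exact hBm b hb X (h𝒜'𝒜 hX)
      · rw [Finset.card_insert_of_notMem hnewO]
        omega
    · -- IN step: add b to B
      have hnewB : b ∉ B := by
        intro hmem
        obtain ⟨P, hPZ, hbP, hPne⟩ := hBs b hmem
        have hPD : P ≠ D₀ := hPne D₀ hD₀𝒜
        exact Finset.disjoint_left.mp (hdisjZ P hPZ D₀ hD₀Z hPD)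
          (Finset.mem_of_mem_erase hbP) (Finset.mem_of_mem_erase hb)
      refine ih 𝒜' O (insert b B) h𝒜'Z ?_ ?_ ?_ ?_ ?_ ?_ h𝒜'c
      · intro o ho
        obtain ⟨P, hPZ, hPo, hPne⟩ := hOs o ho
        exact ⟨P, hPZ, hPo, fun X hX => hPne X (h𝒜'𝒜 hX)⟩
      · intro o ho X hX
        exact hOm o ho X (h𝒜'𝒜 hX)
      · intro b' hb'
        rcases Finset.mem_insert.mp hb' with hb'' | hb''
        · exact ⟨D₀, hD₀Z, hb'' ▸ hb, fun X hX => hD₀not X hX⟩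
        · obtain ⟨P, hPZ, hbP, hPne⟩ := hBs b' hb''
          exact ⟨P, hPZ, hbP, fun X hX => hPne X (h𝒜'𝒜 hX)⟩
      · intro b' hb' X hX
        rcases Finset.mem_insert.mp hb' with hb'' | hb''
        · rw [hb'']; exact hin X hX
        · exact hBm b' hb'' X (h𝒜'𝒜 hX)
      · -- stability of insert b B
        intro b1 hb1 b2 hb2
        rcases Finset.mem_insert.mp hb1 with h1 | h1 <;>
          rcases Finset.mem_insert.mp hb2 with h2 | h2
        · rw [h1, h2]; exact G.irrefl
        · -- b1 = b, b2 ∈ B : b ∈ rest D₀, b2 ∈ rest P, P ≠ D₀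
          rw [h1]
          obtain ⟨P, hPZ, hbP, hPne⟩ := hBs b2 h2
          have hPD : P ≠ D₀ := hPne D₀ hD₀𝒜
          intro hadj
          exact hRanti D₀ hD₀Z P hPZ (fun h => hPD h.symm) b hb b2 hbP hadj
        · rw [h2]
          obtain ⟨P, hPZ, hbP, hPne⟩ := hBs b1 h1
          have hPD : P ≠ D₀ := hPne D₀ hD₀𝒜
          exact hRanti P hPZ D₀ hD₀Z hPD b1 hbP b hb
        · exact hBstab b1 h1 b2 h2
      · rw [Finset.card_insert_of_notMem hnewB]
        omega

lemma machine (s ρ α : ℕ) (hs : 2 ≤ s) (hρ : 1 ≤ ρ) (hα : 2 ≤ α)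
    (hKss : KssFree G s)
    (𝒵 : Finset (Finset V)) (mark : Finset V → V)
    (hmark : ∀ X ∈ 𝒵, mark X ∈ X)
    (hsize : ∀ X ∈ 𝒵, X.card ≤ ρ + 1)
    (hdisjZ : ∀ X ∈ 𝒵, ∀ Y ∈ 𝒵, X ≠ Y → Disjoint X Y)
    (hMstab : ∀ X ∈ 𝒵, ∀ Y ∈ 𝒵, ¬ G.Adj (mark X) (mark Y))
    (hRanti : ∀ X ∈ 𝒵, ∀ Y ∈ 𝒵, X ≠ Y →
       ∀ u ∈ X.erase (mark X), ∀ v ∈ Y.erase (mark Y), ¬ G.Adj u v)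
    (hno : ¬ ∃ 𝒲 ⊆ 𝒵, 𝒲.card = α ∧
       ∀ X ∈ 𝒲, ∀ Y ∈ 𝒲, X ≠ Y → ∀ u ∈ X, ∀ v ∈ Y, ¬ G.Adj u v)
    (hcard : (4*α*ρ) ^ (s + (ρ*(s-1)+1)) * (s * Nat.choose (ρ*(s-1)+1) s + s + 1) ≤ 𝒵.card) :
    False := by
  refine machine_aux s ρ α hs hρ hα hKss 𝒵 mark hmark hsize hdisjZ hMstab hRanti hno
    (s + (ρ*(s-1)+1)) 𝒵 ∅ ∅ (le_refl _) (by simp) (by simp) (by simp) (by simp) (by simp)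
    (by simp) hcard


lemma main_aux (s t : ℕ) (hs : 2 ≤ s) (ht : 1 ≤ t)
    (hKss : KssFree G s)
    (hclique : ¬ ∃ K : Finset V, G.IsNClique t K) :
    ∀ r, 1 ≤ r → ∀ α, 2 ≤ α → ∀ 𝒳 : Finset (Finset V),
    (∀ X ∈ 𝒳, X.Nonempty) → (∀ X ∈ 𝒳, X.card ≤ r) →
    (∀ X ∈ 𝒳, ∀ Y ∈ 𝒳, X ≠ Y → Disjoint X Y) →
    (α ^ sigma' s r * t ^ (sigma' s r - 1) ≤ 𝒳.card) →
    ∃ 𝒴 ⊆ 𝒳, 𝒴.card = α ∧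
      ∀ X ∈ 𝒴, ∀ Y ∈ 𝒴, X ≠ Y → ∀ u ∈ X, ∀ v ∈ Y, ¬ G.Adj u v := by
  classical
  intro r hr
  induction r, hr using Nat.le_induction with
  | base =>
    -- r = 1 : singletons, direct from lemA
    intro α hα 𝒳 hne hsmall hdisj hbig
    have hσ1 : sigma' s 1 = s := by simp [sigma']
    rw [hσ1] at hbig
    set U := 𝒳.biUnion id with hU
    have hUcard : 𝒳.card ≤ U.card := by
      have hcb : U.card = ∑ X ∈ 𝒳, X.card :=
        Finset.card_biUnion (fun X hX Y hY hXY => hdisj X hX Y hY hXY)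
      rw [hcb]
      calc 𝒳.card = ∑ _X ∈ 𝒳, 1 := by simp
      _ ≤ ∑ X ∈ 𝒳, X.card := Finset.sum_le_sum (fun X hX => Finset.card_pos.mpr (hne X hX))
    obtain ⟨W, hWU, hWcard, hWstab⟩ := lemA s t α (by omega) ht (by omega) hKss hclique U
      (le_trans hbig hUcard)
    have hsing : ∀ w ∈ W, ({w} : Finset V) ∈ 𝒳 := by
      intro w hw
      have : w ∈ U := hWU hw
      rw [hU] at this
      obtain ⟨X, hX, hwX⟩ := Finset.mem_biUnion.mp this
      have hXcard := hsmall X hX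
      have : X = {w} := by
        apply Finset.eq_singleton_iff_unique_mem.mpr
        refine ⟨hwX, fun x hx => ?_⟩
        have := Finset.card_le_one.mp (by omega : X.card ≤ 1)
        exact this x hx w hwX
      rw [← this]
      exact hX
    refine ⟨W.image (fun w => ({w} : Finset V)), ?_, ?_, ?_⟩
    · intro X hX
      obtain ⟨w, hw, hwX⟩ := Finset.mem_image.mp hX
      rw [← hwX]
      exact hsing w hw
    · rw [Finset.card_image_of_injective _ Finset.singleton_injective, hWcard]
    · intro X hX Y hY hXY u hu v hv
      obtain ⟨w, hw, hwX⟩ := Finset.mem_image.mp hX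
      obtain ⟨w', hw', hwY⟩ := Finset.mem_image.mp hY
      rw [← hwX] at hu
      rw [← hwY] at hv
      rw [Finset.mem_singleton.mp hu, Finset.mem_singleton.mp hv]
      exact hWstab w hw w' hw'
  | succ r hr ih =>
    intro α hα 𝒳 hne hsmall hdisj hbig
    by_contra hno
    -- numbers
    set σ' := sigma' s r with hσ'
    set A1 := (4*α*r) ^ (s + (r*(s-1)+1)) * (s * Nat.choose (r*(s-1)+1) s + s + 1) with hA1
    set F := A1 ^ σ' * t ^ (σ' - 1) with hF
    set β := (r+1) * (F + α) with hβ
    have hαA1 : α ≤ A1 := two_le_A1 s r α hs hr hα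
    have hA1pos : 2 ≤ A1 := by omega
    have hβbig : β ^ s * t ^ (s-1) ≤ 𝒳.card := by
      calc β ^ s * t ^ (s-1) ≤ α ^ (sigma' s (r+1)) * t ^ (sigma' s (r+1) - 1) :=
            key_arith s r α t hs hr hα ht
      _ ≤ 𝒳.card := hbig
    have hβ1 : 1 ≤ β := by
      have h0 : 1 ≤ F + α := by omega
      calc 1 = 1 * 1 := rfl
      _ ≤ (r+1) * (F + α) := Nat.mul_le_mul (by omega) h0
    -- the union and the stable transversal
    set U := 𝒳.biUnion id with hU
    have hUcard : 𝒳.card ≤ U.card := by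
      have hcb : U.card = ∑ X ∈ 𝒳, X.card :=
        Finset.card_biUnion (fun X hX Y hY hXY => hdisj X hX Y hY hXY)
      rw [hcb]
      calc 𝒳.card = ∑ _X ∈ 𝒳, 1 := by simp
      _ ≤ ∑ X ∈ 𝒳, X.card := Finset.sum_le_sum (fun X hX => Finset.card_pos.mpr (hne X hX))
    obtain ⟨W, hWU, hWcard, hWstab⟩ := lemA s t β (by omega) ht hβ1 hKss hclique U
      (le_trans hβbig hUcard)
    -- the family of sets meeting W
    set 𝒲 := 𝒳.filter (fun X => (X ∩ W).Nonempty) with h𝒲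
    have h𝒲count : F + α ≤ 𝒲.card := by
      have hWsub : W ⊆ 𝒲.biUnion (fun X => X ∩ W) := by
        intro w hw
        have : w ∈ U := hWU hw
        rw [hU] at this
        obtain ⟨X, hX, hwX⟩ := Finset.mem_biUnion.mp this
        refine Finset.mem_biUnion.mpr ⟨X, ?_, Finset.mem_inter.mpr ⟨hwX, hw⟩⟩
        rw [h𝒲, Finset.mem_filter]
        exact ⟨hX, ⟨w, Finset.mem_inter.mpr ⟨hwX, hw⟩⟩⟩
      have h1 : β ≤ 𝒲.card * (r+1) := by
        calc β = W.card := hWcard.symm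
        _ ≤ (𝒲.biUnion (fun X => X ∩ W)).card := Finset.card_le_card hWsub
        _ ≤ ∑ X ∈ 𝒲, (X ∩ W).card := Finset.card_biUnion_le
        _ ≤ ∑ X ∈ 𝒲, (r+1) := Finset.sum_le_sum (fun X hX => by
            calc (X ∩ W).card ≤ X.card := Finset.card_le_card (Finset.inter_subset_left)
            _ ≤ r+1 := hsmall X ((Finset.filter_subset _ _) hX))
        _ = 𝒲.card * (r+1) := by rw [Finset.sum_const, smul_eq_mul]
      have h2 : (F + α) * (r+1) ≤ 𝒲.card * (r+1) := by
        calc (F + α) * (r+1) = β := by rw [hβ]; ring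
        _ ≤ 𝒲.card * (r+1) := h1
      exact Nat.le_of_mul_le_mul_right h2 (by omega)
    have h𝒲𝒳 : 𝒲 ⊆ 𝒳 := Finset.filter_subset _ _
    -- the mark function
    have h𝒲ne : 𝒲.Nonempty := Finset.card_pos.mp (by omega)
    have hVne : Nonempty V := by
      obtain ⟨X₀, hX₀⟩ := h𝒲ne
      obtain ⟨w, hw⟩ := (Finset.mem_filter.mp hX₀).2
      exact ⟨w⟩
    set mark : Finset V → V := fun X =>
      if h : (X ∩ W).Nonempty then h.choose else Classical.arbitrary V with hmark
    have hmarkmem : ∀ X ∈ 𝒲, mark X ∈ X ∧ mark X ∈ W := by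
      intro X hX
      have h := (Finset.mem_filter.mp hX).2
      rw [hmark]
      simp only [dif_pos h]
      have := h.choose_spec
      rw [Finset.mem_inter] at this
      exact this
    -- singles
    set singles := 𝒲.filter (fun X => X.erase (mark X) = ∅) with hsingles
    have hsinglecard : singles.card ≤ α - 1 := by
      by_contra hc
      push_neg at hc
      obtain ⟨𝒴, h𝒴sub, h𝒴c⟩ := Finset.exists_subset_card_eq (by omega : α ≤ singles.card)
      apply hno
      refine ⟨𝒴, (h𝒴sub.trans (Finset.filter_subset _ _)).trans h𝒲𝒳, h𝒴c, ?_⟩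
      intro X hX Y hY hXY u hu v hv
      have hXs := h𝒴sub hX
      have hYs := h𝒴sub hY
      rw [hsingles, Finset.mem_filter] at hXs hYs
      have hXsingle : X = {mark X} := by
        rcases (Finset.erase_eq_empty_iff X (mark X)).mp hXs.2 with h | h
        · exact absurd h (Finset.nonempty_iff_ne_empty.mp (hne X (h𝒲𝒳 hXs.1)))
        · exact h
      have hYsingle : Y = {mark Y} := by
        rcases (Finset.erase_eq_empty_iff Y (mark Y)).mp hYs.2 with h | h
        · exact absurd h (Finset.nonempty_iff_ne_empty.mp (hne Y (h𝒲𝒳 hYs.1)))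
        · exact h
      rw [hXsingle] at hu
      rw [hYsingle] at hv
      rw [Finset.mem_singleton.mp hu, Finset.mem_singleton.mp hv]
      exact hWstab _ (hmarkmem X hXs.1).2 _ (hmarkmem Y hYs.1).2
    set 𝒲' := 𝒲 \ singles with h𝒲'
    have h𝒲'card : F ≤ 𝒲'.card := by
      have : 𝒲'.card = 𝒲.card - singles.card := by
        rw [h𝒲', Finset.card_sdiff_of_subset (Finset.filter_subset _ _)]
      omega
    have h𝒲'mem : ∀ X ∈ 𝒲', X ∈ 𝒲 ∧ (X.erase (mark X)).Nonempty := by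
      intro X hX
      rw [h𝒲', Finset.mem_sdiff] at hX
      refine ⟨hX.1, ?_⟩
      rw [Finset.nonempty_iff_ne_empty]
      intro h
      exact hX.2 (by rw [hsingles, Finset.mem_filter]; exact ⟨hX.1, h⟩)
    -- the rests family
    set ℛ := 𝒲'.image (fun X => X.erase (mark X)) with hℛ
    have hinj : Set.InjOn (fun X : Finset V => X.erase (mark X)) (↑𝒲' : Set (Finset V)) := by
      intro X hX Y hY hXY
      by_contra hne'
      have hXw := h𝒲'mem X hX
      have hYw := h𝒲'mem Y hY
      have h1 : X.erase (mark X) ⊆ X := Finset.erase_subset _ _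
      have h2 : X.erase (mark X) ⊆ Y := by
        have : (fun X => X.erase (mark X)) X = (fun X => X.erase (mark X)) Y := hXY
        simp only at this
        rw [this]
        exact Finset.erase_subset _ _
      obtain ⟨z, hz⟩ := hXw.2
      exact Finset.disjoint_left.mp
        (hdisj X (h𝒲𝒳 hXw.1) Y (h𝒲𝒳 hYw.1) hne') (h1 hz) (h2 hz)
    have hℛcard : F ≤ ℛ.card := by
      rw [hℛ, Finset.card_image_of_injOn hinj]
      exact h𝒲'card
    -- apply the induction hypothesis to the rests
    obtain ⟨𝒴', h𝒴'sub, h𝒴'card, h𝒴'anti⟩ := ih A1 hA1pos ℛ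
      (by
        intro e he
        obtain ⟨X, hX, hXe⟩ := Finset.mem_image.mp he
        rw [← hXe]
        exact (h𝒲'mem X hX).2)
      (by
        intro e he
        obtain ⟨X, hX, hXe⟩ := Finset.mem_image.mp he
        rw [← hXe]
        have h1 := (hmarkmem X (h𝒲'mem X hX).1).1
        rw [Finset.card_erase_of_mem h1]
        have := hsmall X (h𝒲𝒳 (h𝒲'mem X hX).1)
        omega)
      (by
        intro e he e' he' hee
        obtain ⟨X, hX, hXe⟩ := Finset.mem_image.mp he
        obtain ⟨X', hX', hXe'⟩ := Finset.mem_image.mp he'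
        have hXX' : X ≠ X' := by
          intro h
          apply hee
          rw [← hXe, ← hXe', h]
        have hd := hdisj X (h𝒲𝒳 (h𝒲'mem X hX).1) X' (h𝒲𝒳 (h𝒲'mem X' hX').1) hXX'
        rw [← hXe, ← hXe']
        exact hd.mono (Finset.erase_subset _ _) (Finset.erase_subset _ _))
      hℛcard
    -- lift to the full sets
    set 𝒵 := 𝒲'.filter (fun X => X.erase (mark X) ∈ 𝒴') with h𝒵
    have h𝒵𝒲' : 𝒵 ⊆ 𝒲' := Finset.filter_subset _ _
    have h𝒵image : 𝒵.image (fun X => X.erase (mark X)) = 𝒴' := by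
      apply Finset.Subset.antisymm
      · intro e he
        obtain ⟨X, hX, hXe⟩ := Finset.mem_image.mp he
        rw [← hXe]
        exact (Finset.mem_filter.mp hX).2
      · intro e he
        obtain ⟨X, hX, hXe⟩ := Finset.mem_image.mp (h𝒴'sub he)
        refine Finset.mem_image.mpr ⟨X, ?_, hXe⟩
        rw [h𝒵, Finset.mem_filter]
        exact ⟨hX, by rw [hXe]; exact he⟩
    have h𝒵card : 𝒵.card = A1 := by
      rw [← h𝒴'card, ← h𝒵image]
      exact (Finset.card_image_of_injOn (hinj.mono (by
        intro X hX
        exact h𝒵𝒲' hX))).symm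
    -- apply the machine
    apply machine s r α hs hr hα hKss 𝒵 mark
    · intro X hX
      exact (hmarkmem X (h𝒲'mem X (h𝒵𝒲' hX)).1).1
    · intro X hX
      exact hsmall X (h𝒲𝒳 (h𝒲'mem X (h𝒵𝒲' hX)).1)
    · intro X hX Y hY hXY
      exact hdisj X (h𝒲𝒳 (h𝒲'mem X (h𝒵𝒲' hX)).1) Y (h𝒲𝒳 (h𝒲'mem Y (h𝒵𝒲' hY)).1) hXY
    · intro X hX Y hY
      exact hWstab _ (hmarkmem X (h𝒲'mem X (h𝒵𝒲' hX)).1).2 _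
        (hmarkmem Y (h𝒲'mem Y (h𝒵𝒲' hY)).1).2
    · intro X hX Y hY hXY u hu v hv
      have heX : X.erase (mark X) ∈ 𝒴' := (Finset.mem_filter.mp hX).2
      have heY : Y.erase (mark Y) ∈ 𝒴' := (Finset.mem_filter.mp hY).2
      have hee : X.erase (mark X) ≠ Y.erase (mark Y) := by
        intro h
        exact hXY (hinj (h𝒵𝒲' hX) (h𝒵𝒲' hY) h)
      exact h𝒴'anti _ heX _ heY hee u hu v hv
    · intro ⟨𝒲₀, h𝒲₀sub, h𝒲₀card, h𝒲₀anti⟩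
      exact hno ⟨𝒲₀, (h𝒲₀sub.trans ((h𝒵𝒲'.trans (Finset.sdiff_subset)).trans h𝒲𝒳)),
        h𝒲₀card, h𝒲₀anti⟩
    · rw [h𝒵card]

end Graph

end Stmt5Aux

theorem stmt5 {V : Type*} [Fintype V] [DecidableEq V] (G : SimpleGraph V)
    (r s α t : ℕ) (hr : 1 ≤ r) (hs : 1 ≤ s) (hα : 1 ≤ α) (ht : 1 ≤ t)
    (hKss : KssFree G s)
    (hclique : ¬ ∃ K : Finset V, G.IsNClique t K)
    (𝒳 : Finset (Finset V))
    (hne : ∀ X ∈ 𝒳, X.Nonempty)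
    (hsmall : ∀ X ∈ 𝒳, X.card ≤ r)
    (hdisj : ∀ X ∈ 𝒳, ∀ Y ∈ 𝒳, X ≠ Y → Disjoint X Y)
    (hbig : α ^ sigma' s r * t ^ (sigma' s r - 1) ≤ 𝒳.card) :
    ∃ 𝒴 ⊆ 𝒳, 𝒴.card = α ∧
      ∀ X ∈ 𝒴, ∀ Y ∈ 𝒴, X ≠ Y → ∀ u ∈ X, ∀ v ∈ Y, ¬ G.Adj u v := by
  classical
  have hbig1 : 1 ≤ 𝒳.card := by
    have h1 : 1 ≤ α ^ sigma' s r := Nat.one_le_pow _ _ (by omega)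
    have h2 : 1 ≤ t ^ (sigma' s r - 1) := Nat.one_le_pow _ _ (by omega)
    calc 1 = 1 * 1 := rfl
    _ ≤ α ^ sigma' s r * t ^ (sigma' s r - 1) := Nat.mul_le_mul h1 h2
    _ ≤ 𝒳.card := hbig
  by_cases hα1 : α = 1
  · subst hα1
    obtain ⟨X₀, hX₀⟩ := Finset.card_pos.mp hbig1
    refine ⟨{X₀}, by simpa using hX₀, by simp, ?_⟩
    intro X hX Y hY hXY
    rw [Finset.mem_singleton.mp hX, Finset.mem_singleton.mp hY] at hXY
    exact absurd rfl hXY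
  by_cases hs1 : s = 1
  · subst hs1
    have hedge : ∀ u v : V, ¬ G.Adj u v := by
      intro u v hadj
      apply hKss
      refine ⟨{u}, {v}, by simp, by simp, ?_, ?_, ?_, ?_⟩
      · simpa using hadj.ne
      · intro a ha b hb
        rw [Finset.mem_singleton.mp ha, Finset.mem_singleton.mp hb]
        exact hadj
      · intro a ha a' ha'
        rw [Finset.mem_singleton.mp ha, Finset.mem_singleton.mp ha']
        exact G.irrefl
      · intro a ha a' ha'
        rw [Finset.mem_singleton.mp ha, Finset.mem_singleton.mp ha']
        exact G.irrefl
    have hσ : sigma' 1 r = 1 := by simp [sigma']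
    rw [hσ] at hbig
    simp only [pow_one, Nat.sub_self, pow_zero, mul_one] at hbig
    obtain ⟨𝒴, h𝒴sub, h𝒴c⟩ := Finset.exists_subset_card_eq hbig
    exact ⟨𝒴, h𝒴sub, h𝒴c, fun X _ Y _ _ u _ v _ => hedge u v⟩
  · exact Stmt5Aux.main_aux s t (by omega) ht hKss hclique r hr α (by omega) 𝒳
      hne hsmall hdisj hbig
end

section
/- Let G be a finite simple graph and let s ≥ 2 and α ≥ 2 be integers. Suppose x_1, y_1, ..., x_N, y_N are 2N distinct vertices of G such that {x_1,...,x_N} is a stable set, {y_1,...,y_N} is a stable set, and for all i < j, x_i y_j ∈ E(G) or x_j y_i ∈ E(G). If N = (2s)^(2s−1), then G contains an induced K_{s,s}. -/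
lemma aux_dom {N s : ℕ} (hs : 1 ≤ s) (R : Fin N → Fin N → Prop)
    (htot : ∀ u v : Fin N, u ≠ v → R u v ∨ R v u) :
    ∀ k (A B S : Finset (Fin N)),
      Disjoint A S → Disjoint B S → Disjoint A B →
      (∀ a ∈ A, ∀ t ∈ S, R a t) → (∀ t ∈ S, ∀ b ∈ B, R t b) →
      s * 2 ^ k ≤ S.card → 2 * s - 1 ≤ A.card + B.card + k →
      ∃ A' B' : Finset (Fin N), Disjoint A' B' ∧ A'.card = s ∧ B'.card = s ∧
        ∀ a ∈ A', ∀ b ∈ B', R a b := by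
  classical
  intro k
  induction k with
  | zero =>
    intro A B S hAS hBS hAB hA hB hScard hsum
    simp only [pow_zero, mul_one] at hScard
    rcases (by omega : s ≤ A.card ∨ s ≤ B.card) with h | h
    · obtain ⟨A', hA'sub, hA'card⟩ := Finset.exists_subset_card_eq h
      obtain ⟨B', hB'sub, hB'card⟩ := Finset.exists_subset_card_eq hScard
      exact ⟨A', B', (hAS.mono hA'sub hB'sub), hA'card, hB'card,
        fun a ha b hb => hA a (hA'sub ha) b (hB'sub hb)⟩
    · obtain ⟨B', hB'sub, hB'card⟩ := Finset.exists_subset_card_eq h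
      obtain ⟨A', hA'sub, hA'card⟩ := Finset.exists_subset_card_eq hScard
      exact ⟨A', B', ((hBS.mono hB'sub hA'sub).symm), hA'card, hB'card,
        fun a ha b hb => hB a (hA'sub ha) b (hB'sub hb)⟩
  | succ k ih =>
    intro A B S hAS hBS hAB hA hB hScard hsum
    have hSpos : 0 < S.card := by
      have : 0 < s * 2 ^ (k + 1) := by positivity
      omega
    obtain ⟨v, hv⟩ := Finset.card_pos.mp hSpos
    set O : Finset (Fin N) := (S.erase v).filter (fun u => R v u) with hO
    set I : Finset (Fin N) := (S.erase v).filter (fun u => R u v) with hI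
    have hcover : S.erase v ⊆ O ∪ I := by
      intro u hu
      have hne : u ≠ v := Finset.ne_of_mem_erase hu
      rcases htot v u (Ne.symm hne) with h | h
      · exact Finset.mem_union_left _ (Finset.mem_filter.mpr ⟨hu, h⟩)
      · exact Finset.mem_union_right _ (Finset.mem_filter.mpr ⟨hu, h⟩)
    have hcard : S.card - 1 ≤ O.card + I.card := by
      calc S.card - 1 = (S.erase v).card := (Finset.card_erase_of_mem hv).symm
        _ ≤ (O ∪ I).card := Finset.card_le_card hcover
        _ ≤ O.card + I.card := Finset.card_union_le _ _
    have hpow : s * 2 ^ (k + 1) = 2 * (s * 2 ^ k) := by ring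
    have hOS : O ⊆ S := (Finset.filter_subset _ _).trans (Finset.erase_subset _ _)
    have hIS : I ⊆ S := (Finset.filter_subset _ _).trans (Finset.erase_subset _ _)
    have hvO : v ∉ O := fun h => (Finset.notMem_erase v S) (Finset.filter_subset _ _ h)
    have hvI : v ∉ I := fun h => (Finset.notMem_erase v S) (Finset.filter_subset _ _ h)
    have hvA : v ∉ A := Finset.disjoint_right.mp hAS hv
    have hvB : v ∉ B := Finset.disjoint_right.mp hBS hv
    have hspos : 0 < s * 2 ^ k := by positivity
    rcases (by omega : s * 2 ^ k ≤ O.card ∨ s * 2 ^ k ≤ I.card) with h | h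
    · refine ih (insert v A) B O ?_ ?_ ?_ ?_ ?_ h ?_
      · rw [Finset.disjoint_insert_left]
        exact ⟨hvO, hAS.mono_right hOS⟩
      · exact hBS.mono_right hOS
      · rw [Finset.disjoint_insert_left]
        exact ⟨hvB, hAB⟩
      · intro a ha t ht
        rcases Finset.mem_insert.mp ha with rfl | ha
        · exact (Finset.mem_filter.mp ht).2
        · exact hA a ha t (hOS ht)
      · intro t ht b hb
        exact hB t (hOS ht) b hb
      · rw [Finset.card_insert_of_notMem hvA]; omega
    · refine ih A (insert v B) I ?_ ?_ ?_ ?_ ?_ h ?_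
      · exact hAS.mono_right hIS
      · rw [Finset.disjoint_insert_left]
        exact ⟨hvI, hBS.mono_right hIS⟩
      · rw [Finset.disjoint_insert_right]
        exact ⟨hvA, hAB⟩
      · intro a ha t ht
        exact hA a ha t (hIS ht)
      · intro t ht b hb
        rcases Finset.mem_insert.mp hb with rfl | hb
        · exact (Finset.mem_filter.mp ht).2
        · exact hB t (hIS ht) b hb
      · rw [Finset.card_insert_of_notMem hvB]; omega

theorem stmt7 {V : Type*} (G : SimpleGraph V) (s : ℕ) (hs : 2 ≤ s)
    (N : ℕ) (hN : N = (2 * s) ^ (2 * s - 1))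
    (x y : Fin N → V)
    (hxinj : Function.Injective x) (hyinj : Function.Injective y)
    (hxy : ∀ i j, x i ≠ y j)
    (hxstable : ∀ i j, i ≠ j → ¬ G.Adj (x i) (x j))
    (hystable : ∀ i j, i ≠ j → ¬ G.Adj (y i) (y j))
    (hcross : ∀ i j : Fin N, i < j → G.Adj (x i) (y j) ∨ G.Adj (x j) (y i)) :
    ∃ A B : Finset V, A.card = s ∧ B.card = s ∧ Disjoint A B ∧
      (∀ a ∈ A, ∀ b ∈ B, G.Adj a b) ∧
      (∀ a ∈ A, ∀ a' ∈ A, ¬ G.Adj a a') ∧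
      (∀ b ∈ B, ∀ b' ∈ B, ¬ G.Adj b b') := by
  classical
  set R : Fin N → Fin N → Prop := fun i j => G.Adj (x i) (y j) with hR
  have htot : ∀ u v : Fin N, u ≠ v → R u v ∨ R v u := by
    intro u v huv
    rcases lt_or_gt_of_ne huv with h | h
    · exact hcross u v h
    · exact (hcross v u h).symm
  have hNcard : s * 2 ^ (2 * s - 1) ≤ N := by
    rw [hN]
    have he : 2 * s - 1 ≠ 0 := by omega
    calc s * 2 ^ (2 * s - 1) ≤ s ^ (2 * s - 1) * 2 ^ (2 * s - 1) :=
          Nat.mul_le_mul_right _ (Nat.le_self_pow he s)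
      _ = (s * 2) ^ (2 * s - 1) := (mul_pow _ _ _).symm
      _ = (2 * s) ^ (2 * s - 1) := by rw [mul_comm s 2]
  obtain ⟨Ai, Bi, hABdisj, hAcard, hBcard, hadj⟩ :=
    aux_dom (by omega : 1 ≤ s) R htot (2 * s - 1) ∅ ∅ Finset.univ
      (Finset.disjoint_empty_left _) (Finset.disjoint_empty_left _)
      (Finset.disjoint_empty_left _)
      (by simp) (by simp)
      (by simpa using hNcard) (by omega)
  refine ⟨Ai.image x, Bi.image y, ?_, ?_, ?_, ?_, ?_, ?_⟩
  · rw [Finset.card_image_of_injective _ hxinj, hAcard]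
  · rw [Finset.card_image_of_injective _ hyinj, hBcard]
  · rw [Finset.disjoint_left]
    rintro a ha hb
    obtain ⟨i, hi, rfl⟩ := Finset.mem_image.mp ha
    obtain ⟨j, hj, hij⟩ := Finset.mem_image.mp hb
    exact hxy i j hij.symm
  · rintro a ha b hb
    obtain ⟨i, hi, rfl⟩ := Finset.mem_image.mp ha
    obtain ⟨j, hj, rfl⟩ := Finset.mem_image.mp hb
    exact hadj i hi j hj
  · rintro a ha a' ha'
    obtain ⟨i, hi, rfl⟩ := Finset.mem_image.mp ha
    obtain ⟨j, hj, rfl⟩ := Finset.mem_image.mp ha'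
    by_cases hij : i = j
    · subst hij; exact G.irrefl
    · exact hxstable i j hij
  · rintro b hb b' hb'
    obtain ⟨i, hi, rfl⟩ := Finset.mem_image.mp hb
    obtain ⟨j, hj, rfl⟩ := Finset.mem_image.mp hb'
    by_cases hij : i = j
    · subst hij; exact G.irrefl
    · exact hystable i j hij
end

section
/- Every (2,3)-constellation contains a theta as an induced subgraph. Consequently, every theta-free graph contains no (2,3)-constellation. -/
/-- `p` is an induced path in `G` (as a walk). -/
def IsInducedPathWalk {V : Type*} (G : SimpleGraph V) {a b : V} (p : G.Walk a b) : Prop :=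
  p.IsPath ∧ p.toSubgraph.IsInduced

/-- `G` contains a theta as an induced subgraph: two distinct non-adjacent vertices joined
by three pairwise internally disjoint induced paths, each of length at least two, with no
edges between the interiors of distinct paths. -/
def HasTheta {V : Type*} (G : SimpleGraph V) : Prop :=
  ∃ (a b : V) (p₁ p₂ p₃ : G.Walk a b),
    a ≠ b ∧ ¬ G.Adj a b ∧
    IsInducedPathWalk G p₁ ∧ IsInducedPathWalk G p₂ ∧ IsInducedPathWalk G p₃ ∧
    2 ≤ p₁.length ∧ 2 ≤ p₂.length ∧ 2 ≤ p₃.length ∧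
    (∀ v, v ∈ p₁.support → v ∈ p₂.support → v = a ∨ v = b) ∧
    (∀ v, v ∈ p₁.support → v ∈ p₃.support → v = a ∨ v = b) ∧
    (∀ v, v ∈ p₂.support → v ∈ p₃.support → v = a ∨ v = b) ∧
    (∀ u v, u ∈ p₁.support → v ∈ p₂.support →
      u ≠ a → u ≠ b → v ≠ a → v ≠ b → ¬ G.Adj u v) ∧
    (∀ u v, u ∈ p₁.support → v ∈ p₃.support →
      u ≠ a → u ≠ b → v ≠ a → v ≠ b → ¬ G.Adj u v) ∧
    (∀ u v, u ∈ p₂.support → v ∈ p₃.support →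
      u ≠ a → u ≠ b → v ≠ a → v ≠ b → ¬ G.Adj u v)

/-- `G` is theta-free: no induced subgraph of `G` is a theta. -/
def ThetaFree {V : Type*} (G : SimpleGraph V) : Prop := ¬ HasTheta G

/-- A chord in a walk whose edge is not in the walk's subgraph yields a strictly
shorter walk with support inside the original support. -/
lemma shortcut_aux {V : Type*} [DecidableEq V] (C : SimpleGraph V) {a b u v : V}
    (p : C.Walk a b) (huv : C.Adj u v) (hu : u ∈ p.support) (hv : v ∈ p.support)
    (hn : ¬ p.toSubgraph.Adj u v) :
    ∃ q : C.Walk a b, q.length < p.length ∧ ∀ x ∈ q.support, x ∈ p.support := by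
  induction p with
  | nil =>
    simp only [SimpleGraph.Walk.support_nil, List.mem_singleton] at hu hv
    subst hu; subst hv
    exact absurd huv C.irrefl
  | @cons a c b h q ih =>
    simp only [SimpleGraph.Walk.support_cons, List.mem_cons] at hu hv
    have htsub : (SimpleGraph.Walk.cons h q).toSubgraph
        = C.subgraphOfAdj h ⊔ q.toSubgraph := rfl
    rw [htsub] at hn
    simp only [SimpleGraph.Subgraph.sup_adj, not_or] at hn
    obtain ⟨hn1, hn2⟩ := hn
    have hdrop : ∀ (w z : V) (hwz : C.Adj a w) (hw : w ∈ q.support) (hwc : w ≠ c),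
        ∃ r : C.Walk a b, r.length < (SimpleGraph.Walk.cons h q).length ∧
          ∀ x ∈ r.support, x ∈ (SimpleGraph.Walk.cons h q).support := by
      intro w z hwz hw hwc
      refine ⟨SimpleGraph.Walk.cons hwz (q.dropUntil w hw), ?_, ?_⟩
      · have hspec := congrArg SimpleGraph.Walk.length (q.take_spec hw)
        rw [SimpleGraph.Walk.length_append] at hspec
        have htk : (q.takeUntil w hw).length ≠ 0 := by
          intro h0
          exact hwc (SimpleGraph.Walk.eq_of_length_eq_zero h0).symm
        simp only [SimpleGraph.Walk.length_cons]
        omega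
      · intro x hx
        simp only [SimpleGraph.Walk.support_cons, List.mem_cons] at hx ⊢
        rcases hx with rfl | hx
        · exact Or.inl rfl
        · exact Or.inr (q.support_dropUntil_subset hw hx)
    rcases hu with rfl | hu
    · rcases hv with rfl | hv
      · exact absurd huv C.irrefl
      · have hvc : v ≠ c := by
          rintro rfl
          exact hn1 (by simp)
        exact hdrop v v huv hv hvc
    · rcases hv with rfl | hv
      · have huc : u ≠ c := by
          rintro rfl
          exact hn1 (by simp [SimpleGraph.subgraphOfAdj_adj])
        exact hdrop u u huv.symm hu huc
      · have hn2' : ¬ q.toSubgraph.Adj u v := hn2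
        obtain ⟨r, hr1, hr2⟩ := ih hu hv hn2'
        refine ⟨SimpleGraph.Walk.cons h r, by simpa using hr1, ?_⟩
        intro x hx
        simp only [SimpleGraph.Walk.support_cons, List.mem_cons] at hx ⊢
        rcases hx with rfl | hx
        · exact Or.inl rfl
        · exact Or.inr (hr2 x hx)

/-- If there is any walk from `a` to `b` with support in `W`, then there is an induced
path from `a` to `b` with support in `W`. -/
lemma exists_induced_path {V : Type*} [DecidableEq V] (C : SimpleGraph V) {a b : V}
    (W : Set V) (hex : ∃ p : C.Walk a b, ∀ x ∈ p.support, x ∈ W) :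
    ∃ p : C.Walk a b, IsInducedPathWalk C p ∧ ∀ x ∈ p.support, x ∈ W := by
  classical
  obtain ⟨p0, hp0⟩ := hex
  have hP : ∃ n, ∃ p : C.Walk a b, p.length = n ∧ ∀ x ∈ p.support, x ∈ W :=
    ⟨p0.length, p0, rfl, hp0⟩
  obtain ⟨p, hplen, hpsup⟩ := Nat.find_spec hP
  have hbsup : ∀ x ∈ p.bypass.support, x ∈ W :=
    fun x hx => hpsup x (p.support_bypass_subset hx)
  refine ⟨p.bypass, ⟨p.bypass_isPath, ?_⟩, hbsup⟩
  intro u hu v hv huv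
  rw [SimpleGraph.Walk.mem_verts_toSubgraph] at hu hv
  by_contra hn
  obtain ⟨q, hq1, hq2⟩ := shortcut_aux C p.bypass huv hu hv hn
  have hlt : q.length < Nat.find hP := by
    have := p.length_bypass_le
    omega
  exact Nat.find_min hP hlt ⟨q, rfl, fun x hx => hbsup x (hq2 x hx)⟩

/-- Inside a component carrying an induced path, with `a` and `b` each having a
neighbour, there is an induced `a`-`b` path with interior in the component. -/
lemma component_path {V : Type*} [DecidableEq V] (C : SimpleGraph V) {a b : V}
    (K : Set V) (hab : a ≠ b) (hnab : ¬ C.Adj a b)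
    (hq : ∃ (x y : V) (q : C.Walk x y), IsInducedPathWalk C q ∧
      {v : V | v ∈ q.support} = K)
    (hna : ∃ w ∈ K, C.Adj a w) (hnb : ∃ w ∈ K, C.Adj b w) :
    ∃ p : C.Walk a b, IsInducedPathWalk C p ∧ 2 ≤ p.length ∧
      ∀ x ∈ p.support, x = a ∨ x = b ∨ x ∈ K := by
  obtain ⟨x, y, q, _, hqK⟩ := hq
  obtain ⟨w₁, hw₁K, haw₁⟩ := hna
  obtain ⟨w₂, hw₂K, hbw₂⟩ := hnb
  have hw₁ : w₁ ∈ q.support := by rw [← hqK] at hw₁K; exact hw₁K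
  have hw₂ : w₂ ∈ q.support := by rw [← hqK] at hw₂K; exact hw₂K
  -- build a walk from a to b through the component
  have hex : ∃ p : C.Walk a b, ∀ z ∈ p.support, z = a ∨ z = b ∨ z ∈ K := by
    refine ⟨SimpleGraph.Walk.cons haw₁
      ((((q.takeUntil w₁ hw₁).reverse.append q).append (q.dropUntil w₂ hw₂).reverse).append
        (SimpleGraph.Walk.cons hbw₂.symm SimpleGraph.Walk.nil)), ?_⟩
    intro z hz
    simp only [SimpleGraph.Walk.support_cons, SimpleGraph.Walk.mem_support_append_iff,
      SimpleGraph.Walk.support_reverse, List.mem_reverse, List.mem_cons,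
      SimpleGraph.Walk.support_nil, List.mem_singleton] at hz
    have hmem : ∀ {z' : V}, z' ∈ q.support → z' ∈ K := by
      intro z' hz'; rw [← hqK]; exact hz'
    rcases hz with rfl | ((hz | hz) | hz) | (rfl | rfl | hz)
    · exact Or.inl rfl
    · exact Or.inr (Or.inr (hmem (q.support_takeUntil_subset hw₁ hz)))
    · exact Or.inr (Or.inr (hmem hz))
    · exact Or.inr (Or.inr (hmem (q.support_dropUntil_subset hw₂ hz)))
    · exact Or.inr (Or.inr (hmem hw₂))
    · exact Or.inr (Or.inl rfl)
    · exact absurd hz List.not_mem_nil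
  obtain ⟨p, hpind, hpsup⟩ := exists_induced_path C {z | z = a ∨ z = b ∨ z ∈ K} hex
  refine ⟨p, hpind, ?_, hpsup⟩
  -- length at least 2
  cases p with
  | nil => exact absurd rfl hab
  | cons h r =>
    cases r with
    | nil => exact absurd h hnab
    | cons h' r' => simp only [SimpleGraph.Walk.length_cons]; omega

theorem stmt8 {V : Type*} [Fintype V] [DecidableEq V] (C : SimpleGraph V)
    (S : Finset V) (hScard : S.card = 2)
    (hSstable : ∀ u ∈ S, ∀ v ∈ S, u ≠ v → ¬ C.Adj u v)
    (K₁ K₂ K₃ : Set V)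
    (hne₁ : K₁.Nonempty) (hne₂ : K₂.Nonempty) (hne₃ : K₃.Nonempty)
    (hd₁₂ : Disjoint K₁ K₂) (hd₁₃ : Disjoint K₁ K₃) (hd₂₃ : Disjoint K₂ K₃)
    (hcover : K₁ ∪ K₂ ∪ K₃ = {v : V | v ∉ S})
    (hanti₁₂ : ∀ u ∈ K₁, ∀ v ∈ K₂, ¬ C.Adj u v)
    (hanti₁₃ : ∀ u ∈ K₁, ∀ v ∈ K₃, ¬ C.Adj u v)
    (hanti₂₃ : ∀ u ∈ K₂, ∀ v ∈ K₃, ¬ C.Adj u v)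
    (hpath₁ : ∃ (a b : V) (p : C.Walk a b), IsInducedPathWalk C p ∧
      {v : V | v ∈ p.support} = K₁)
    (hpath₂ : ∃ (a b : V) (p : C.Walk a b), IsInducedPathWalk C p ∧
      {v : V | v ∈ p.support} = K₂)
    (hpath₃ : ∃ (a b : V) (p : C.Walk a b), IsInducedPathWalk C p ∧
      {v : V | v ∈ p.support} = K₃)
    (hnbr : ∀ s ∈ S, (∃ w ∈ K₁, C.Adj s w) ∧ (∃ w ∈ K₂, C.Adj s w) ∧
      (∃ w ∈ K₃, C.Adj s w)) :
    HasTheta C := by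
  obtain ⟨a, b, hab, hS⟩ := Finset.card_eq_two.mp hScard
  have haS : a ∈ S := by rw [hS]; simp
  have hbS : b ∈ S := by rw [hS]; simp
  have hnab : ¬ C.Adj a b := hSstable a haS b hbS hab
  obtain ⟨ha1, ha2, ha3⟩ := hnbr a haS
  obtain ⟨hb1, hb2, hb3⟩ := hnbr b hbS
  obtain ⟨p₁, hind₁, hlen₁, hsup₁⟩ :=
    component_path C K₁ hab hnab hpath₁ ha1 hb1
  obtain ⟨p₂, hind₂, hlen₂, hsup₂⟩ :=
    component_path C K₂ hab hnab hpath₂ ha2 hb2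
  obtain ⟨p₃, hind₃, hlen₃, hsup₃⟩ :=
    component_path C K₃ hab hnab hpath₃ ha3 hb3
  have int₁ : ∀ v ∈ p₁.support, v ≠ a → v ≠ b → v ∈ K₁ := by
    intro v hv hva hvb; rcases hsup₁ v hv with rfl | rfl | h
    · exact absurd rfl hva
    · exact absurd rfl hvb
    · exact h
  have int₂ : ∀ v ∈ p₂.support, v ≠ a → v ≠ b → v ∈ K₂ := by
    intro v hv hva hvb; rcases hsup₂ v hv with rfl | rfl | h
    · exact absurd rfl hva
    · exact absurd rfl hvb
    · exact h
  have int₃ : ∀ v ∈ p₃.support, v ≠ a → v ≠ b → v ∈ K₃ := by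
    intro v hv hva hvb; rcases hsup₃ v hv with rfl | rfl | h
    · exact absurd rfl hva
    · exact absurd rfl hvb
    · exact h
  have hcap : ∀ (X Y : Set V), Disjoint X Y →
      ∀ (f : ∀ v ∈ p₁.support, v ≠ a → v ≠ b → v ∈ X)
        (g : ∀ v ∈ p₂.support, v ≠ a → v ≠ b → v ∈ Y), True := fun _ _ _ _ _ => trivial
  refine ⟨a, b, p₁, p₂, p₃, hab, hnab, hind₁, hind₂, hind₃, hlen₁, hlen₂, hlen₃,
    ?_, ?_, ?_, ?_, ?_, ?_⟩
  · intro v hv1 hv2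
    by_contra hcon
    push_neg at hcon
    exact (hd₁₂.ne_of_mem (int₁ v hv1 hcon.1 hcon.2) (int₂ v hv2 hcon.1 hcon.2)) rfl
  · intro v hv1 hv3
    by_contra hcon
    push_neg at hcon
    exact (hd₁₃.ne_of_mem (int₁ v hv1 hcon.1 hcon.2) (int₃ v hv3 hcon.1 hcon.2)) rfl
  · intro v hv2 hv3
    by_contra hcon
    push_neg at hcon
    exact (hd₂₃.ne_of_mem (int₂ v hv2 hcon.1 hcon.2) (int₃ v hv3 hcon.1 hcon.2)) rfl
  · intro u v hu hv hua hub hva hvb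
    exact hanti₁₂ u (int₁ u hu hua hub) v (int₂ v hv hva hvb)
  · intro u v hu hv hua hub hva hvb
    exact hanti₁₃ u (int₁ u hu hua hub) v (int₃ v hv hva hvb)
  · intro u v hu hv hua hub hva hvb
    exact hanti₂₃ u (int₂ u hu hua hub) v (int₃ v hv hva hvb)
end

section
/- Let H be a forest on at most h vertices. Then there exists a tree H⁺ on at most h + 1 vertices containing H as an induced subgraph. Moreover, every (h+1, h+1)-tree (T, x) contains an induced subgraph isomorphic to H⁺, and hence contains an induced subgraph isomorphic to H. -/
open SimpleGraph Walk

section TreeLemmas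
variable {V : Type*} {G : SimpleGraph V}

lemma tree_path_len (hG : G.IsTree) {u v : V} (p : G.Walk u v) (hp : p.IsPath) :
    p.length = G.dist u v := by
  obtain ⟨q, hq⟩ := hG.isConnected.exists_walk_length_eq_dist u v
  have hqp := q.isPath_of_length_eq_dist hq
  obtain ⟨w, -, huniq⟩ := hG.existsUnique_path u v
  rw [(huniq p hp).trans (huniq q hqp).symm, hq]

lemma dist_split [DecidableEq V] (hc : G.Connected) {u v w : V} (p : G.Walk u v)
    (hl : p.length = G.dist u v) (hw : w ∈ p.support) :
    G.dist u w + G.dist w v = G.dist u v := by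
  have h1 : G.dist u w ≤ (p.takeUntil w hw).length := dist_le _
  have h2 : G.dist w v ≤ (p.dropUntil w hw).length := dist_le _
  have h3 := congrArg Walk.length (p.take_spec hw)
  rw [Walk.length_append] at h3
  have h4 := hc.dist_triangle (u := u) (v := w) (w := v)
  omega

lemma adj_dist_step [DecidableEq V] (hG : G.IsTree) {x u v : V} (h : G.Adj u v) :
    G.dist x v = G.dist x u + 1 ∨ G.dist x u = G.dist x v + 1 := by
  have hc := hG.isConnected
  obtain ⟨p, hp⟩ := hc.exists_walk_length_eq_dist x u
  obtain ⟨q, hq⟩ := hc.exists_walk_length_eq_dist x v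
  have hqath := q.isPath_of_length_eq_dist hq
  have h1 : G.dist x v ≤ G.dist x u + 1 := by
    have := dist_le (p.concat h); rwa [Walk.length_concat, hp] at this
  have h2 : G.dist x u ≤ G.dist x v + 1 := by
    have := dist_le (q.concat h.symm); rwa [Walk.length_concat, hq] at this
  have hne : G.dist x u ≠ G.dist x v := by
    intro heq
    by_cases hu : u ∈ q.support
    · have h5 := dist_split hc q hq hu
      have h6 : G.dist u v = 0 := by omega
      exact h.ne (hc.dist_eq_zero_iff.mp h6)
    · have hpath2 : (q.concat h.symm).IsPath := by
        rw [← isPath_reverse_iff, reverse_concat, cons_isPath_iff]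
        exact ⟨hqath.reverse, by simpa using hu⟩
      have h7 := tree_path_len hG _ hpath2
      rw [length_concat, hq] at h7
      omega
  omega

lemma parent_spec [DecidableEq V] (hG : G.IsTree) {x v : V} (hv : 0 < G.dist x v) :
    ∃ u, G.Adj v u ∧ G.dist x u + 1 = G.dist x v ∧
      ∀ w, G.Adj v w → G.dist x w + 1 = G.dist x v → w = u := by
  classical
  have hc := hG.isConnected
  obtain ⟨p, hp⟩ := hc.exists_walk_length_eq_dist x v
  set d := G.dist x v with hd
  -- existence
  have hlt : d - 1 < p.length := by omega
  have hadj : G.Adj (p.getVert (d-1)) (p.getVert d) := by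
    have := p.adj_getVert_succ (i := d - 1) (by omega)
    rwa [show d - 1 + 1 = d by omega] at this
  have hvd : p.getVert d = v := by rw [← hp]; exact p.getVert_length
  set u := p.getVert (d-1) with hu
  have husup : u ∈ p.support := mem_support_iff_exists_getVert.mpr ⟨d-1, rfl, by omega⟩
  have hsplit := dist_split hc p hp husup
  have huv : G.Adj v u := by rw [← hvd]; exact hadj.symm
  have huvd : G.dist u v = 1 := dist_eq_one_iff_adj.mpr huv.symm
  have hudist : G.dist x u + 1 = d := by omega
  refine ⟨u, huv, hudist, ?_⟩
  -- uniqueness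
  intro w hvw hwd
  have key : ∀ z, G.Adj v z → G.dist x z + 1 = d →
      ∃ qz : G.Walk x v, qz.IsPath ∧ qz.reverse.getVert 1 = z := by
    intro z hvz hzd
    obtain ⟨pz, hpz⟩ := hc.exists_walk_length_eq_dist x z
    have hpzpath := pz.isPath_of_length_eq_dist hpz
    have hvsup : v ∉ pz.support := by
      intro hmem
      have := dist_split hc pz hpz hmem
      omega
    refine ⟨pz.concat hvz.symm, ?_, ?_⟩
    · rw [← isPath_reverse_iff, reverse_concat, cons_isPath_iff]
      exact ⟨hpzpath.reverse, by simpa using hvsup⟩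
    · rw [reverse_concat, getVert_cons_succ]; exact getVert_zero _
  obtain ⟨qw, hqw, hqw1⟩ := key w hvw hwd
  obtain ⟨qu, hqu, hqu1⟩ := key u huv hudist
  obtain ⟨w0, -, huniq⟩ := hG.existsUnique_path x v
  rw [(huniq qw hqw).trans (huniq qu hqu).symm, hqu1] at hqw1
  exact hqw1.symm

lemma dist_le_card [Fintype V] (hc : G.Connected) (u v : V) :
    G.dist u v < Fintype.card V := by
  obtain ⟨p, hp⟩ := hc.exists_walk_length_eq_dist u v
  have := (p.isPath_of_length_eq_dist hp).length_lt
  omega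

lemma reachable_induce {s : Set V} :
    ∀ {u v : V} (p : G.Walk u v) (hu : u ∈ s) (hv : v ∈ s),
      (∀ w ∈ p.support, w ∈ s) →
      ∃ q : (G.induce s).Walk ⟨u,hu⟩ ⟨v,hv⟩, q.length = p.length := by
  intro u v p
  induction p with
  | nil => exact fun hu hv _ => ⟨Walk.nil, rfl⟩
  | @cons a c b h p ih =>
    intro hu hv hs
    have hw : c ∈ s := hs c (by simp)
    obtain ⟨q, hq⟩ := ih hw hv (fun w hw' => hs w (by simp [hw']))
    exact ⟨Walk.cons (by simpa using h) q, by simp [hq]⟩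

end TreeLemmas

section Main
variable {γ : Type} [Fintype γ]

lemma children_card (T : SimpleGraph γ) [DecidableRel T.Adj] (x : γ) (h : ℕ)
    (hT : T.IsTree) (hdegx : T.degree x = h+1)
    (hdeg : ∀ v, v ≠ x → T.degree v ≠ 1 → T.degree v = h+1)
    (hleaf : ∀ v, T.degree v = 1 → T.dist x v = h)
    {v : γ} (hv : T.dist x v < h) :
    h ≤ ((T.neighborFinset v).filter (fun z => T.dist x z = T.dist x v + 1)).card := by
  classical
  by_cases hvx : v = x
  · subst hvx
    have : (T.neighborFinset v).filter (fun z => T.dist v z = T.dist v v + 1)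
        = T.neighborFinset v := by
      apply Finset.filter_true_of_mem
      intro z hz
      rw [SimpleGraph.dist_self]
      simpa using dist_eq_one_iff_adj.mpr ((T.mem_neighborFinset _ _).mp hz)
    rw [this, SimpleGraph.card_neighborFinset_eq_degree, hdegx]
    omega
  · have hdv : T.degree v = h + 1 := by
      refine hdeg v hvx (fun h1 => ?_)
      rw [hleaf v h1] at hv; omega
    have hpos : 0 < T.dist x v := hT.isConnected.pos_dist_of_ne (Ne.symm hvx)
    obtain ⟨u, huadj, hud, huniq⟩ := parent_spec hT hpos
    have hsub : (T.neighborFinset v).filter (fun z => ¬ T.dist x z = T.dist x v + 1)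
        ⊆ {u} := by
      intro z hz
      simp only [Finset.mem_filter, T.mem_neighborFinset] at hz
      obtain ⟨hzadj, hzd⟩ := hz
      rcases adj_dist_step hT hzadj with h1 | h1
      · exact absurd h1 hzd
      · simp only [Finset.mem_singleton]
        exact huniq z hzadj (by omega)
    have hcard := Finset.card_filter_add_card_filter_not
      (s := T.neighborFinset v) (fun z => T.dist x z = T.dist x v + 1)
    have hdeg2 : T.degree v = (T.neighborFinset v).card := rfl
    have := Finset.card_le_card hsub
    simp only [Finset.card_singleton] at this
    omega

lemma main_embed (T : SimpleGraph γ) [DecidableRel T.Adj] (x : γ) (h : ℕ)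
    (hT : T.IsTree) (hdegx : T.degree x = h+1)
    (hdeg : ∀ v, v ≠ x → T.degree v ≠ 1 → T.degree v = h+1)
    (hleaf : ∀ v, T.degree v = 1 → T.dist x v = h) :
    ∀ (n : ℕ) {σ : Type} [Fintype σ] (S : SimpleGraph σ), S.IsTree →
      Fintype.card σ = n → n ≤ h+1 → ∀ r : σ,
      ∃ f : S ↪g T, f r = x ∧ ∀ v, T.dist x (f v) = S.dist r v := by
  classical
  intro n
  induction n with
  | zero =>
    intro σ _ S _ hcard _ r
    exact absurd hcard (by have := Fintype.card_pos_iff.mpr ⟨r⟩; omega)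
  | succ n ih =>
    intro σ _ S hS hcard hn r
    rcases Nat.eq_zero_or_pos n with hn0 | hn1
    · -- single vertex
      subst hn0
      have hall : ∀ v : σ, v = r := fun v => Fintype.card_le_one_iff.mp (by omega) v r
      refine ⟨⟨⟨fun _ => x, fun a b _ => (hall a).trans (hall b).symm⟩, ?_⟩, rfl, ?_⟩
      · intro a b
        show T.Adj x x ↔ S.Adj a b
        constructor
        · intro hadj; exact absurd hadj (T.loopless.irrefl x)
        · intro hadj; rw [hall a, hall b] at hadj; exact absurd hadj (S.loopless.irrefl r)
      · intro v; rw [hall v]; show T.dist x x = S.dist r r; simp [SimpleGraph.dist_self]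
    · -- n ≥ 1, card σ = n + 1 ≥ 2
      have hc := hS.isConnected
      haveI : Nonempty σ := ⟨r⟩
      obtain ⟨l, hmax⟩ := Finite.exists_max (fun v : σ => S.dist r v)
      set M := S.dist r l with hM
      have hM1 : 1 ≤ M := by
        obtain ⟨w, hw⟩ := Fintype.exists_ne_of_one_lt_card (by omega) r
        have := hc.pos_dist_of_ne (Ne.symm hw)
        have := hmax w
        omega
      have hlr : l ≠ r := by
        intro hlr; rw [hlr] at hM; simp [SimpleGraph.dist_self] at hM; omega
      have hMh : M ≤ h := by
        have := dist_le_card hc r l; omega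
      -- parent of l
      obtain ⟨p₀, hp₀adj, hp₀d, hp₀uniq⟩ := parent_spec hS (x := r) (v := l) (by omega)
      have hlnbr : ∀ w, S.Adj l w → w = p₀ := by
        intro w hw
        rcases adj_dist_step hS (x := r) hw with h1 | h1
        · exact absurd h1 (by have := hmax w; omega)
        · exact hp₀uniq w hw (by omega)
      have hp₀l : p₀ ≠ l := fun he => S.ne_of_adj hp₀adj he.symm
      set s : Set σ := {v | v ≠ l} with hsdef
      haveI : Fintype ↥s := Fintype.ofFinite _
      have hrs : r ∈ s := Ne.symm hlr
      have hscard : Fintype.card ↥s = n := by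
        have he : Fintype.card ↥s = Fintype.card {v : σ // ¬ v = l} :=
          Fintype.card_congr (Equiv.subtypeEquivRight (fun _ => Iff.rfl))
        rw [he, Fintype.card_subtype_compl, Fintype.card_subtype_eq]
        omega
      have havoid : ∀ (v : σ), v ≠ l → ∀ (p : S.Walk r v), p.length = S.dist r v →
          l ∉ p.support := by
        intro v hv p hp hmem
        have h5 := dist_split hc p hp hmem
        have h6 := hmax v
        have h0 : S.dist l v = 0 := by omega
        exact hv (hc.dist_eq_zero_iff.mp h0).symm
      have hSd : ∀ (v : σ) (hv : v ≠ l),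
          ∃ q : (S.induce s).Walk ⟨r, hrs⟩ ⟨v, hv⟩, q.length = S.dist r v := by
        intro v hv
        obtain ⟨p, hp⟩ := hc.exists_walk_length_eq_dist r v
        have hav := havoid v hv p hp
        obtain ⟨q, hq⟩ := reachable_induce p hrs hv
          (fun w hw => (show w ∈ s from fun hwl => hav (hwl ▸ hw)))
        exact ⟨q, by rw [hq, hp]⟩
      have hS' : (S.induce s).IsTree := by
        constructor
        · rw [connected_iff]
          refine ⟨?_, ⟨⟨r, hrs⟩⟩⟩
          rintro ⟨va, hva⟩ ⟨vb, hvb⟩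
          obtain ⟨qa, -⟩ := hSd va hva
          obtain ⟨qb, -⟩ := hSd vb hvb
          exact ⟨qa.reverse.append qb⟩
        · intro v c hcyc
          exact hS.IsAcyclic _
            ((Walk.map_isCycle_iff_of_injective (f := (Embedding.induce s).toHom) (p := c)
              (fun a b hab => (Embedding.induce (G := S) s).injective hab)).mpr hcyc)
      have hdistpres : ∀ (v : σ) (hv : v ≠ l),
          (S.induce s).dist ⟨r, hrs⟩ ⟨v, hv⟩ = S.dist r v := by
        intro v hv
        apply le_antisymm
        · obtain ⟨q, hq⟩ := hSd v hv
          have := dist_le q; omega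
        · obtain ⟨q, hq⟩ := hS'.isConnected.exists_walk_length_eq_dist ⟨r, hrs⟩ ⟨v, hv⟩
          have h9 := dist_le (q.map (Embedding.induce s).toHom)
          rwa [Walk.length_map, hq] at h9
      obtain ⟨f', hf'r, hf'd⟩ := ih (S.induce s) hS' hscard (by omega) ⟨r, hrs⟩
      set y := f' ⟨p₀, hp₀l⟩ with hy
      have hydist : T.dist x y = S.dist r p₀ := by rw [hy, hf'd, hdistpres]
      have hyh : T.dist x y < h := by omega
      set K := (T.neighborFinset y).filter (fun z => T.dist x z = T.dist x y + 1) with hK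
      have hKcard : h ≤ K.card := children_card T x h hT hdegx hdeg hleaf hyh
      have hfresh : ∃ z ∈ K, ∀ v' : ↥s, f' v' ≠ z := by
        by_contra hcon
        push_neg at hcon
        have hmemK : ∀ z ∈ K, ∃ v' : ↥s, f' v' = z ∧ (S.induce s).Adj ⟨p₀, hp₀l⟩ v' := by
          intro z hz
          obtain ⟨v', hv'⟩ := hcon z hz
          refine ⟨v', hv', ?_⟩
          have hadjT : T.Adj y z := (T.mem_neighborFinset _ _).mp (Finset.mem_filter.mp hz).1
          rw [← hv'] at hadjT
          exact f'.map_rel_iff.mp hadjT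
        have htot : ∀ z : γ, ∃ v' : ↥s, z ∈ K →
            f' v' = z ∧ (S.induce s).Adj ⟨p₀, hp₀l⟩ v' := by
          intro z
          by_cases hz : z ∈ K
          · obtain ⟨v', h1, h2⟩ := hmemK z hz; exact ⟨v', fun _ => ⟨h1, h2⟩⟩
          · exact ⟨⟨r, hrs⟩, fun hzz => absurd hzz hz⟩
        choose g hg using htot
        set N := Finset.univ.filter (fun v' : ↥s => (S.induce s).Adj ⟨p₀, hp₀l⟩ v') with hN
        have hKN : K.card ≤ N.card := by
          apply Finset.card_le_card_of_injOn g
          · exact fun z hz => Finset.mem_filter.mpr ⟨Finset.mem_univ _, (hg z hz).2⟩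
          · exact fun z1 h1 z2 h2 he => by rw [← (hg z1 h1).1, ← (hg z2 h2).1, he]
        have hNsub : N ⊆ Finset.univ.erase ⟨p₀, hp₀l⟩ := by
          intro v' hv'
          simp only [hN, Finset.mem_filter] at hv'
          exact Finset.mem_erase.mpr
            ⟨fun he => (S.induce s).loopless.irrefl _ (he ▸ hv'.2), Finset.mem_univ _⟩
        have hNcard := Finset.card_le_card hNsub
        rw [Finset.card_erase_of_mem (Finset.mem_univ _), Finset.card_univ, hscard] at hNcard
        omega
      obtain ⟨z, hzK, hznotim⟩ := hfresh
      have hadjyz : T.Adj y z := (T.mem_neighborFinset _ _).mp (Finset.mem_filter.mp hzK).1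
      have hzd : T.dist x z = T.dist x y + 1 := by
        have := (Finset.mem_filter.mp hzK).2
        simpa using this
      refine ⟨⟨⟨fun v => if hv : v = l then z else f' ⟨v, hv⟩, ?_⟩, ?_⟩, ?_, ?_⟩
      · -- injective
        intro a b hab
        simp only at hab
        by_cases ha : a = l
        · by_cases hb : b = l
          · rw [ha, hb]
          · rw [dif_pos ha, dif_neg hb] at hab
            exact absurd hab.symm (hznotim _)
        · by_cases hb : b = l
          · rw [dif_neg ha, dif_pos hb] at hab
            exact absurd hab (hznotim _)
          · rw [dif_neg ha, dif_neg hb] at hab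
            exact congrArg Subtype.val (f'.injective hab)
      · -- map_rel_iff
        intro a b
        show T.Adj (if hv : a = l then z else f' ⟨a, hv⟩) (if hv : b = l then z else f' ⟨b, hv⟩) ↔ S.Adj a b
        by_cases ha : a = l
        · by_cases hb : b = l
          · rw [dif_pos ha, dif_pos hb]
            constructor
            · intro hadj; exact absurd hadj (T.loopless.irrefl z)
            · intro hadj; rw [ha, hb] at hadj; exact absurd hadj (S.loopless.irrefl l)
          · rw [dif_pos ha, dif_neg hb]
            subst ha
            constructor
            · intro hadj
              have hd : T.dist x (f' ⟨b, hb⟩) = S.dist r b := by rw [hf'd, hdistpres]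
              have hdb : S.dist r b ≤ M := hmax b
              rcases adj_dist_step hT (x := x) hadj with h1 | h1
              · exact absurd h1 (by omega)
              · obtain ⟨u, huadj, hud, huniq⟩ := parent_spec hT (x := x) (v := z) (by omega)
                have h2 : f' ⟨b, hb⟩ = u := huniq _ hadj (by omega)
                have h3 : y = u := huniq y hadjyz.symm (by omega)
                have h4 : (⟨b, hb⟩ : ↥s) = ⟨p₀, hp₀l⟩ := f'.injective (by rw [h2, ← h3, hy])
                have hbp : b = p₀ := congrArg Subtype.val h4
                rw [hbp]; exact hp₀adj
            · intro hadj
              have hbp := hlnbr b hadj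
              have hfb : f' ⟨b, hb⟩ = y := by subst hbp; rfl
              rw [hfb]; exact hadjyz.symm
        · by_cases hb : b = l
          · rw [dif_neg ha, dif_pos hb]
            subst hb
            rw [T.adj_comm, S.adj_comm]
            constructor
            · intro hadj
              have hd : T.dist x (f' ⟨a, ha⟩) = S.dist r a := by rw [hf'd, hdistpres]
              have hdb : S.dist r a ≤ M := hmax a
              rcases adj_dist_step hT (x := x) hadj with h1 | h1
              · exact absurd h1 (by omega)
              · obtain ⟨u, huadj, hud, huniq⟩ := parent_spec hT (x := x) (v := z) (by omega)
                have h2 : f' ⟨a, ha⟩ = u := huniq _ hadj (by omega)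
                have h3 : y = u := huniq y hadjyz.symm (by omega)
                have h4 : (⟨a, ha⟩ : ↥s) = ⟨p₀, hp₀l⟩ := f'.injective (by rw [h2, ← h3, hy])
                have hap : a = p₀ := congrArg Subtype.val h4
                rw [hap]; exact hp₀adj
            · intro hadj
              have hap := hlnbr a hadj
              have hfa : f' ⟨a, ha⟩ = y := by subst hap; rfl
              rw [hfa]; exact hadjyz.symm
          · rw [dif_neg ha, dif_neg hb, f'.map_rel_iff]
            exact Iff.rfl
      · -- maps r to x
        show (if hv : r = l then z else f' ⟨r, hv⟩) = x
        rw [dif_neg (Ne.symm hlr)]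
        exact hf'r
      · -- distances
        intro v
        show T.dist x (if hv : v = l then z else f' ⟨v, hv⟩) = S.dist r v
        by_cases hv : v = l
        · rw [dif_pos hv, hv]
          omega
        · rw [dif_neg hv, hf'd, hdistpres]

section Plus
variable {α : Type}

noncomputable def grep (H : SimpleGraph α) (v : α) : α := (H.connectedComponentMk v).out

lemma reachable_grep (H : SimpleGraph α) (v : α) : H.Reachable v (grep H v) :=
  (ConnectedComponent.eq.mp (Quot.out_eq (H.connectedComponentMk v))).symm

lemma grep_eq_of_reachable (H : SimpleGraph α) {u v : α} (hr : H.Reachable u v) :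
    grep H u = grep H v := by
  unfold grep
  rw [show H.connectedComponentMk u = H.connectedComponentMk v from ConnectedComponent.sound hr]

def HplusAdj (H : SimpleGraph α) : Option α → Option α → Prop
  | some u, some v => H.Adj u v
  | none, some v => grep H v = v
  | some u, none => grep H u = u
  | none, none => False

def Hplus (H : SimpleGraph α) : SimpleGraph (Option α) where
  Adj := HplusAdj H
  symm := ⟨by rintro (a|a) (b|b) hab <;> simp only [HplusAdj] at * <;> try exact hab
              exact hab.symm⟩
  loopless := ⟨by rintro (a|a) hab <;> simp only [HplusAdj] at hab
                  exact H.loopless.irrefl a hab⟩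

lemma hplus_some_some (H : SimpleGraph α) (u v : α) :
    (Hplus H).Adj (some u) (some v) ↔ H.Adj u v := Iff.rfl

def someHom (H : SimpleGraph α) : H →g Hplus H where
  toFun := some
  map_rel' := fun hab => hab

def someEmb (H : SimpleGraph α) : H ↪g Hplus H where
  toFun := some
  inj' := Option.some_injective α
  map_rel_iff' := Iff.rfl

lemma hplus_pull (H : SimpleGraph α) :
    ∀ {a b : Option α} (q : (Hplus H).Walk a b) (u v : α)
      (ha : a = some u) (hb : b = some v), none ∉ q.support →
      ∃ q' : H.Walk u v, q'.map (someHom H) = q.copy ha hb := by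
  intro a b q
  induction q with
  | nil =>
    rintro u v rfl hb _
    obtain rfl : u = v := by injection hb
    exact ⟨Walk.nil, rfl⟩
  | @cons a c b hadj q ih =>
    rintro u v rfl rfl hns
    obtain ⟨u', rfl⟩ : ∃ u', c = some u' := by
      cases c with
      | none => exact absurd (by simp : (none : Option α) ∈ _) hns
      | some u' => exact ⟨u', rfl⟩
    have hadj' : H.Adj u u' := hadj
    obtain ⟨q', hq'⟩ := ih u' v rfl rfl (fun hmem => hns (by simp [hmem]))
    refine ⟨Walk.cons hadj' q', ?_⟩
    rw [Walk.map_cons, hq']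
    rfl

lemma hplus_isTree (H : SimpleGraph α) (hH : H.IsAcyclic) : (Hplus H).IsTree := by
  classical
  constructor
  · -- connected
    rw [connected_iff]
    refine ⟨?_, ⟨none⟩⟩
    have key : ∀ a : Option α, (Hplus H).Reachable a none := by
      rintro (_|v)
      · rfl
      · have h1 : (Hplus H).Reachable (some v) (some (grep H v)) :=
          (reachable_grep H v).map (someHom H)
        have h2 : (Hplus H).Adj (some (grep H v)) none := by
          show grep H (grep H v) = grep H v
          exact grep_eq_of_reachable H (reachable_grep H v).symm
        exact h1.trans h2.reachable
    exact fun a b => (key a).trans (key b).symm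
  · -- acyclic
    intro v c hcyc
    by_cases hnone : none ∈ c.support
    · -- rotate to none
      have hcyc' := hcyc.rotate hnone
      set c' := c.rotate none hnone with hc'
      clear_value c'
      cases c' with
      | nil => exact hcyc'.ne_nil rfl
      | cons hadj p =>
        rename_i w
        obtain ⟨v₁, rfl⟩ : ∃ v₁, w = some v₁ := by
          cases w with
          | none => exact absurd hadj ((Hplus H).loopless.irrefl none)
          | some v₁ => exact ⟨v₁, rfl⟩
        have hv₁ : grep H v₁ = v₁ := hadj
        have hp : p.IsPath := ((Walk.cons_isCycle_iff p hadj).mp hcyc').1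
        -- decompose p from the end
        have hrev := hp.reverse
        rcases hrev2 : p.reverse with _ | ⟨hadj₂, q₂⟩
        · rename_i w₂
          obtain ⟨v₂, rfl⟩ : ∃ v₂, w₂ = some v₂ := by
            cases w₂ with
            | none => exact absurd hadj₂ ((Hplus H).loopless.irrefl none)
            | some v₂ => exact ⟨v₂, rfl⟩
          have hv₂ : grep H v₂ = v₂ := hadj₂
          rw [hrev2] at hrev
          rw [Walk.cons_isPath_iff] at hrev
          obtain ⟨hq₂path, hnoneq₂⟩ := hrev
          obtain ⟨q', hq'⟩ := hplus_pull H q₂ v₂ v₁ rfl rfl hnoneq₂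
          have hreach : H.Reachable v₂ v₁ := ⟨q'⟩
          have hv12 : v₁ = v₂ := by
            rw [← hv₁, ← hv₂, grep_eq_of_reachable H hreach.symm]
          subst hv12
          have hq2nil : q₂ = Walk.nil := (Walk.isPath_iff_eq_nil (p := q₂)).mp hq₂path
          have hlen2 : p.length = q₂.length + 1 := by
            have hl := congrArg Walk.length hrev2
            simpa using hl
          have hq2len : q₂.length = 0 := by rw [hq2nil]; rfl
          have h3 := hcyc'.three_le_length
          rw [Walk.length_cons] at h3
          omega
    · -- cycle avoiding none
      obtain ⟨v₀, rfl⟩ : ∃ v₀, v = some v₀ := by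
        cases v with
        | none => exact absurd c.start_mem_support hnone
        | some v₀ => exact ⟨v₀, rfl⟩
      obtain ⟨c', hc'⟩ := hplus_pull H c v₀ v₀ rfl rfl hnone
      rw [Walk.copy_rfl_rfl] at hc'
      rw [← hc'] at hcyc
      exact hH c' ((Walk.map_isCycle_iff_of_injective
        (fun a b hab => Option.some_injective α hab)).mp hcyc)

end Plus

/-- `(T, x)` is an `(a,b)`-tree: `T` is a tree; if `b = 1` then `V(T) = {x}`; if `b ≥ 2`
then `x` has degree exactly `a`, every non-leaf vertex other than `x` has degree exactly
`a`, and every leaf is at distance exactly `b - 1` from `x`. -/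
def IsABTree {V : Type*} [Fintype V] (a b : ℕ) (T : SimpleGraph V)
    [DecidableRel T.Adj] (x : V) : Prop :=
  T.IsTree ∧
  (b = 1 → ∀ v : V, v = x) ∧
  (2 ≤ b →
    T.degree x = a ∧
    (∀ v : V, v ≠ x → T.degree v ≠ 1 → T.degree v = a) ∧
    (∀ v : V, T.degree v = 1 → T.dist x v = b - 1))

theorem stmt10 {α : Type} [Fintype α] (H : SimpleGraph α)
    (h : ℕ) (hh : 1 ≤ h) (hHforest : H.IsAcyclic) (hHcard : Fintype.card α ≤ h) :
    ∃ (β : Type) (_ : Fintype β) (Hplus : SimpleGraph β),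
      Fintype.card β ≤ h + 1 ∧ Hplus.IsTree ∧ Nonempty (H ↪g Hplus) ∧
      ∀ (γ : Type) [Fintype γ] (T : SimpleGraph γ) [DecidableRel T.Adj] (x : γ),
        IsABTree (h + 1) (h + 1) T x →
          Nonempty (Hplus ↪g T) ∧ Nonempty (H ↪g T) := by
  classical
  refine ⟨Option α, inferInstance, Hplus H, ?_, hplus_isTree H hHforest, ⟨someEmb H⟩, ?_⟩
  · rw [Fintype.card_option]; omega
  · intro γ _ T _ x hABT
    obtain ⟨hT, -, hb⟩ := hABT
    obtain ⟨hdegx, hdeg, hleaf⟩ := hb (by omega)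
    have hleaf' : ∀ v, T.degree v = 1 → T.dist x v = h := by
      intro v hv
      have := hleaf v hv
      omega
    obtain ⟨f, -, -⟩ := main_embed T x h hT hdegx hdeg hleaf'
      (Fintype.card (Option α)) (Hplus H) (hplus_isTree H hHforest) rfl
      (by rw [Fintype.card_option]; omega) none
    exact ⟨⟨f⟩, ⟨f.comp (someEmb H)⟩⟩
end Main
end

section
/- For every integer s ≥ 1: if a finite simple graph G contains no induced K_{s,s} and V(G) can be partitioned (in part) into N pairwise disjoint singletons {v_1}, ..., {v_N} with N ≥ α^s · t^(s−1), G is K_t-free, then among v_1, ..., v_N there are α pairwise non-adjacent vertices. (The base case r = 1 of the anticomplete-families lemma, equivalent to the Erdős–Hajnal property for K_{s,s}.) -/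
open Finset

theorem Nat.sum_range_choose_le_add_one_pow (n k : ℕ) :
    ∑ j ∈ range (k + 1), n.choose j ≤ (n + 1) ^ k := by
  induction k with
  | zero => simp
  | succ k ih =>
    have hlast : n.choose (k + 1) ≤ (n + 1) ^ k * n :=
      calc n.choose (k + 1) ≤ n ^ k * n := (Nat.choose_le_pow n (k + 1)).trans_eq (pow_succ n k)
        _ ≤ (n + 1) ^ k * n := by gcongr; omega
    rw [sum_range_succ, pow_succ, mul_add_one]
    omega

theorem Finset.card_filter_card_le_le_add_one_pow {α : Type*} (S : Finset α) (k : ℕ) :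
    #{B ∈ S.powerset | #B ≤ k} ≤ (#S + 1) ^ k := by
  classical
  calc #{B ∈ S.powerset | #B ≤ k}
      ≤ #((range (k + 1)).biUnion S.powersetCard) := by
        refine card_le_card fun B hB => ?_
        rw [mem_filter, mem_powerset] at hB
        exact mem_biUnion.2
          ⟨#B, mem_range.2 (Nat.lt_succ_of_le hB.2), mem_powersetCard.2 ⟨hB.1, rfl⟩⟩
    _ ≤ ∑ j ∈ range (k + 1), #(S.powersetCard j) := card_biUnion_le
    _ = ∑ j ∈ range (k + 1), (#S).choose j := by simp only [card_powersetCard]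
    _ ≤ (#S + 1) ^ k := Nat.sum_range_choose_le_add_one_pow _ _

theorem not_kssFree_zero {V : Type*} (G : SimpleGraph V) : ¬ KssFree G 0 :=
  fun h => h ⟨∅, ∅, by simp⟩

theorem KssFree.comap {V W : Type*} {G : SimpleGraph W} {f : V → W} (hf : Function.Injective f)
    {s : ℕ} (h : KssFree G s) : KssFree (G.comap f) s := by
  rintro ⟨A, B, hA, hB, hAB, hadj, hAindep, hBindep⟩
  exact h ⟨A.map ⟨f, hf⟩, B.map ⟨f, hf⟩, by simpa, by simpa, (disjoint_map _).2 hAB,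
    by simpa using hadj, by simpa using hAindep, by simpa using hBindep⟩

namespace SimpleGraph

variable {V : Type*} {G : SimpleGraph V}

theorem IsIndepSet.not_adj {S : Set V} (hS : G.IsIndepSet S) {x y : V} (hx : x ∈ S)
    (hy : y ∈ S) : ¬ G.Adj x y := by
  rcases eq_or_ne x y with rfl | hxy
  · exact G.irrefl
  · exact hS hx hy hxy

/-- The Erdős–Szekeres bound `R(p + 1, q + 1) ≤ (q + p).choose p`. -/
theorem exists_isNIndepSet_of_cliqueFreeOn [DecidableEq V] [DecidableRel G.Adj] (p q : ℕ)
    {U : Finset V} (hU : G.CliqueFreeOn U (q + 1)) (hcard : (q + p).choose p ≤ #U) :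
    ∃ A ⊆ U, G.IsNIndepSet (p + 1) A := by
  induction p generalizing q U with
  | zero =>
    obtain ⟨x, hx⟩ : U.Nonempty := card_pos.1 (by simpa using hcard)
    exact ⟨{x}, singleton_subset_iff.2 hx, by simp [isNIndepSet_iff]⟩
  | succ p ihp =>
    induction q generalizing U with
    | zero =>
      obtain ⟨x, hx⟩ : U.Nonempty := card_pos.1 (by simpa using hcard)
      exact absurd (hU.subset _ (singleton_subset_set_iff.2 hx)) (by simp)
    | succ q ihq =>
      obtain ⟨x, hx⟩ : U.Nonempty :=
        card_pos.1 (hcard.trans_lt' (Nat.choose_pos (by omega)))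
      set Nbr := {y ∈ U.erase x | G.Adj x y}
      set NonNbr := {y ∈ U.erase x | ¬ G.Adj x y}
      have hsplit : #Nbr + #NonNbr + 1 = #U := by
        rw [card_filter_add_card_filter_not, card_erase_add_one hx]
      have hpascal : (q + 1 + (p + 1)).choose (p + 1)
          = (q + 1 + p).choose p + (q + (p + 1)).choose (p + 1) := by
        rw [show q + 1 + (p + 1) = q + 1 + p + 1 by omega, Nat.choose_succ_succ,
          show q + 1 + p = q + (p + 1) by omega]
      by_cases hNbr : (q + (p + 1)).choose (p + 1) ≤ #Nbr
      · have hNbrFree : G.CliqueFreeOn Nbr (q + 1) := fun K hK hKc => by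
          refine hU (t := insert x K) ?_ (hKc.insert fun b hb => (mem_filter.1 (hK hb)).2)
          rw [coe_insert, Set.insert_subset_iff]
          exact ⟨hx, hK.trans (coe_subset.2 ((filter_subset _ _).trans (erase_subset _ _)))⟩
        obtain ⟨A, hAU, hA⟩ := ihq hNbrFree hNbr
        exact ⟨A, hAU.trans ((filter_subset _ _).trans (erase_subset _ _)), hA⟩
      · obtain ⟨A, hAU, hA⟩ := ihp (q + 1) (U := NonNbr)
          (hU.subset _ (coe_subset.2 ((filter_subset _ _).trans (erase_subset _ _)))) (by omega)
        have hxA : x ∉ A := fun h => by simpa [NonNbr] using hAU h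
        refine ⟨insert x A, insert_subset hx (hAU.trans ?_), ?_⟩
        · exact (filter_subset _ _).trans (erase_subset _ _)
        rw [← isNClique_compl] at hA ⊢
        refine hA.insert fun b hb => ?_
        have hb' := mem_filter.1 (hAU hb)
        exact (compl_adj G x b).2 ⟨fun h => (mem_erase.1 hb'.1).1 h.symm, hb'.2⟩

variable [Fintype V] [DecidableEq V] [DecidableRel G.Adj] {s t : ℕ}

theorem card_commonNeighbors_lt_of_kssFree (hK : KssFree G (s + 1)) (hc : G.CliqueFree (t + 1))
    {B : Finset V} (hB : G.IsNIndepSet (s + 1) B) :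
    #{x | ∀ b ∈ B, G.Adj x b} < (t + s).choose s := by
  by_contra! h
  obtain ⟨A, hAF, hA⟩ := exists_isNIndepSet_of_cliqueFreeOn s t hc.cliqueFreeOn h
  have hAB : ∀ a ∈ A, ∀ b ∈ B, G.Adj a b := fun a ha => (mem_filter.1 (hAF ha)).2
  exact hK ⟨A, B, hA.card_eq, hB.card_eq,
    Finset.disjoint_left.2 fun _ ha haB => G.irrefl (hAB _ ha _ haB), hAB,
    fun _ ha _ ha' => hA.isIndepSet.not_adj ha ha',
    fun _ hb _ hb' => hB.isIndepSet.not_adj hb hb'⟩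

/-- Otherwise replacing `B` by an independent set of `#B + 1` such vertices would enlarge `S`. -/
theorem card_filter_trace_eq_lt (hc : G.CliqueFree (t + 1)) {S B : Finset V}
    (hS : G.IsMaximumIndepSet S) (hBS : B ⊆ S) :
    #{x | x ∉ S ∧ {y ∈ S | G.Adj x y} = B} < (t + #B).choose #B := by
  by_contra! h
  obtain ⟨X, hXF, hX⟩ := exists_isNIndepSet_of_cliqueFreeOn #B t hc.cliqueFreeOn h
  have hXtrace : ∀ x ∈ X, x ∉ S ∧ {y ∈ S | G.Adj x y} = B :=
    fun x hx => (mem_filter.1 (hXF hx)).2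
  have hdisj : Disjoint (S \ B) X :=
    Finset.disjoint_left.2 fun _ ha haX => (hXtrace _ haX).1 (mem_sdiff.1 ha).1
  have hindep : G.IsIndepSet ↑(S \ B ∪ X) := by
    rw [coe_union, isIndepSet_iff, Set.pairwise_union]
    refine ⟨hS.isIndepSet.mono (coe_subset.2 sdiff_subset), hX.isIndepSet,
      fun a ha x hx _ => ?_⟩
    rw [mem_coe, mem_sdiff] at ha
    have hxa : ¬ G.Adj x a := fun hxa => ha.2 ((hXtrace x hx).2 ▸ mem_filter.2 ⟨ha.1, hxa⟩)
    exact ⟨fun hax => hxa hax.symm, hxa⟩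
  have := hS.maximum _ hindep
  rw [card_union_of_disjoint hdisj, card_sdiff_of_subset hBS, hX.card_eq] at this
  have := card_le_card hBS
  omega

theorem card_le_of_isMaximumIndepSet (hK : KssFree G (s + 1)) (hc : G.CliqueFree (t + 1))
    {S : Finset V} (hS : G.IsMaximumIndepSet S) :
    Fintype.card V ≤ #S + (#S + 1) ^ (s + 1) * ((t + 1) ^ s - 1) := by
  let piece (B : Finset V) : Finset V :=
    if #B ≤ s then ({x | x ∉ S ∧ {y ∈ S | G.Adj x y} = B} : Finset V)
    else ({x | ∀ b ∈ B, G.Adj x b} : Finset V)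
  set labels := {B ∈ S.powerset | #B ≤ s + 1}
  have hcover : (univ : Finset V) ⊆ S ∪ labels.biUnion piece := by
    intro x _
    by_cases hx : x ∈ S
    · exact mem_union_left _ hx
    refine mem_union_right _ (mem_biUnion.2 ?_)
    by_cases hsmall : #{y ∈ S | G.Adj x y} ≤ s
    · refine ⟨{y ∈ S | G.Adj x y},
        mem_filter.2 ⟨mem_powerset.2 (filter_subset _ _), by omega⟩, ?_⟩
      simp [piece, hsmall, hx]
    · obtain ⟨B, hB, hBcard⟩ := exists_subset_card_eq (s := {y ∈ S | G.Adj x y}) (n := s + 1)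
        (by omega)
      refine ⟨B, mem_filter.2 ⟨mem_powerset.2 (hB.trans (filter_subset _ _)), hBcard.le⟩,
        ?_⟩
      simp only [piece, hBcard, if_neg (Nat.not_succ_le_self s), mem_filter, mem_univ, true_and]
      exact fun b hb => (mem_filter.1 (hB hb)).2
  have hpiece : ∀ B ∈ labels, #(piece B) ≤ (t + 1) ^ s - 1 := by
    intro B hB
    rw [mem_filter, mem_powerset] at hB
    suffices #(piece B) < (t + 1) ^ s by omega
    by_cases hsmall : #B ≤ s
    · simp only [piece, if_pos hsmall]
      calc _ < (t + #B).choose #B := card_filter_trace_eq_lt hc hS hB.1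
        _ ≤ (t + 1) ^ #B := Nat.choose_add_le_add_one_pow _ _
        _ ≤ (t + 1) ^ s := Nat.pow_le_pow_right (by omega) hsmall
    · simp only [piece, if_neg hsmall]
      have hBindep : G.IsNIndepSet (s + 1) B :=
        ⟨hS.isIndepSet.mono (coe_subset.2 hB.1), by omega⟩
      calc _ < (t + s).choose s := card_commonNeighbors_lt_of_kssFree hK hc hBindep
        _ ≤ (t + 1) ^ s := Nat.choose_add_le_add_one_pow _ _
  calc Fintype.card V = #(univ : Finset V) := card_univ.symm
    _ ≤ #S + #(labels.biUnion piece) := (card_le_card hcover).trans (card_union_le _ _)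
    _ ≤ #S + ∑ B ∈ labels, #(piece B) := by gcongr; exact card_biUnion_le
    _ ≤ #S + #labels * ((t + 1) ^ s - 1) := by gcongr; exact sum_le_card_nsmul _ _ _ hpiece
    _ ≤ #S + (#S + 1) ^ (s + 1) * ((t + 1) ^ s - 1) := by
        gcongr; exact card_filter_card_le_le_add_one_pow S (s + 1)

theorem exists_isNIndepSet_of_kssFree_of_cliqueFree {s t α : ℕ} (hK : KssFree G s)
    (hc : G.CliqueFree t) (hcard : α ^ s * t ^ (s - 1) ≤ Fintype.card V) :
    ∃ S, G.IsNIndepSet α S := by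
  obtain _ | s := s
  · exact absurd hK (not_kssFree_zero G)
  obtain _ | t := t
  · exact absurd hc not_cliqueFree_zero
  obtain ⟨S, hS⟩ := G.maximumIndepSet_exists
  by_cases hα : α ≤ #S
  · obtain ⟨A, hAS, hA⟩ := exists_subset_card_eq hα
    exact ⟨A, hS.isIndepSet.mono (coe_subset.2 hAS), hA⟩
  have hbound := card_le_of_isMaximumIndepSet hK hc hS
  have hpow : (#S + 1) ^ (s + 1) ≤ α ^ (s + 1) := Nat.pow_le_pow_left (by omega) _
  have hα_le : α ≤ α ^ (s + 1) := Nat.le_self_pow (by omega) α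
  obtain ⟨T, hT⟩ := Nat.exists_eq_add_one.2 (pow_pos t.succ_pos s)
  rw [Nat.add_sub_cancel, hT] at hcard
  rw [hT, Nat.add_sub_cancel] at hbound
  nlinarith

end SimpleGraph

theorem stmt19_general {V : Type*} (G : SimpleGraph V)
    (s t α N : ℕ)
    (hKss : KssFree G s)
    (hclique : ¬ ∃ K : Finset V, G.IsNClique t K)
    (v : Fin N → V) (hv : Function.Injective v)
    (hbig : α ^ s * t ^ (s - 1) ≤ N) :
    ∃ S : Finset (Fin N), S.card = α ∧
      ∀ i ∈ S, ∀ j ∈ S, i ≠ j → ¬ G.Adj (v i) (v j) := by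
  classical
  have hc : (G.comap v).CliqueFree t :=
    SimpleGraph.CliqueFree.comap (SimpleGraph.Embedding.comap ⟨v, hv⟩ G).isContained
      (not_exists.1 hclique)
  obtain ⟨S, hS⟩ := SimpleGraph.exists_isNIndepSet_of_kssFree_of_cliqueFree (hKss.comap hv) hc
    (by simpa using hbig)
  exact ⟨S, hS.card_eq, fun i hi j hj hij => hS.isIndepSet hi hj hij⟩

theorem stmt19 {V : Type*} (G : SimpleGraph V)
    (s t α N : ℕ) (hs : 1 ≤ s) (ht : 1 ≤ t) (hα : 1 ≤ α) (hN : 1 ≤ N)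
    (hKss : KssFree G s)
    (hclique : ¬ ∃ K : Finset V, G.IsNClique t K)
    (v : Fin N → V) (hv : Function.Injective v)
    (hbig : α ^ s * t ^ (s - 1) ≤ N) :
    ∃ S : Finset (Fin N), S.card = α ∧
      ∀ i ∈ S, ∀ j ∈ S, i ≠ j → ¬ G.Adj (v i) (v j) :=
  stmt19_general G s t α N hKss hclique v hv hbig
end
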